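/- arXiv:1412.4405 — 7 statements merged into one kernel-verified Lean document; each statement's English description precedes it below -/
import Mathlib

section
/- Let m ≥ 2 and let p₁, …, p_m be distinct points in Euclidean space ℝ^d forming only acute angles (for all triples of distinct indices i, j, l the angle ∠p_i p_j p_l is acute). Then for every N ∈ ℕ there exists a finite set V of points in Euclidean space ℝ^{d+m} that contains the complete m-partite graph K_m(N) in its strict double-normal graph, i.e., there are m pairwise disjoint subsets V₁, …, V_m of V, each of cardinality N, such that any two points lying in different subsets form a strict double-normal pair of V. -/
open scoped RealInnerProductSpace

abbrev Euc (d : ℕ) := EuclideanSpace ℝ (Fin d)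

/-- `p, q` form a double-normal pair of the finite point set `V`. -/
def IsDoubleNormalPair {d : ℕ} (V : Finset (Euc d)) (p q : Euc d) : Prop :=
  p ≠ q ∧ p ∈ V ∧ q ∈ V ∧
    ∀ x ∈ V, 0 ≤ ⟪x - p, q - p⟫ ∧ 0 ≤ ⟪x - q, p - q⟫

/-- `p, q` form a strict double-normal pair of the finite point set `V`. -/
def IsStrictDoubleNormalPair {d : ℕ} (V : Finset (Euc d)) (p q : Euc d) : Prop :=
  p ≠ q ∧ p ∈ V ∧ q ∈ V ∧
    ∀ x ∈ V, x ≠ p → x ≠ q → 0 < ⟪x - p, q - p⟫ ∧ 0 < ⟪x - q, p - q⟫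

/-- Some finite set in `ℝ^d` contains the complete `k`-partite graph `K_k(r)`
in its double-normal graph. -/
def ContainsDNMultipartite (d k r : ℕ) : Prop :=
  ∃ (V : Finset (Euc d)) (P : Fin k → Finset (Euc d)),
    (∀ i, P i ⊆ V) ∧ (∀ i, (P i).card = r) ∧
    (∀ i j, i ≠ j → Disjoint (P i) (P j)) ∧
    (∀ i j, i ≠ j → ∀ p ∈ P i, ∀ q ∈ P j, IsDoubleNormalPair V p q)

/-- Some finite set in `ℝ^d` contains the complete `k`-partite graph `K_k(r)`
in its strict double-normal graph. -/
def ContainsStrictDNMultipartite (d k r : ℕ) : Prop :=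
  ∃ (V : Finset (Euc d)) (P : Fin k → Finset (Euc d)),
    (∀ i, P i ⊆ V) ∧ (∀ i, (P i).card = r) ∧
    (∀ i j, i ≠ j → Disjoint (P i) (P j)) ∧
    (∀ i j, i ≠ j → ∀ p ∈ P i, ∀ q ∈ P j, IsStrictDoubleNormalPair V p q)

/-!
Lift the `i`-th point to the parabola `c ↦ (p i + T c² wᵢ, c eᵢ)`, where
`wᵢ = ∑ l, (p l - p i)` points into the configuration and the `eᵢ` are `m` new orthonormal
directions, and let the `i`-th part consist of its points at the heights `c = δ Qᵏ`, `k < N`.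
For `u` on the `i`-th and `w` on the `j`-th parabola and `x` on any parabola other than the
`i`-th, `⟪x - u, w - u⟫` is at least a quantity tending to an inner product
`⟪p l - p i, p j - p i⟫ > 0` of the acute configuration as `δ → 0`. For `x` on the `i`-th
parabola itself, at heights `δ a` for `x` and `δ b` for `u`, it equals
`δ² (a - b) (T γ (a + b) - b) + O(δ⁴)` with `γ = ⟪wᵢ, p j - p i⟫ > 0`; as `a / b` is `≥ Q`
or `≤ 1 / Q`, this is positive once `1 < T γ (Q + 1) < Q` for every pair `i ≠ j`, which a
suitable choice of `T` and `Q` achieves. Finitely many conditions of the form "positive for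
all small `δ > 0`" then hold simultaneously.
-/

open Filter Topology

section Acute

variable {F : Type*} [NormedAddCommGroup F] [InnerProductSpace ℝ F] {m : ℕ} {p : Fin m → F}

theorem inner_sub_sub_pos_of_acute (hinj : Function.Injective p)
    (hacute : ∀ i j l : Fin m, i ≠ j → j ≠ l → i ≠ l → 0 < ⟪p i - p j, p l - p j⟫)
    {i j l : Fin m} (hli : l ≠ i) (hij : i ≠ j) : 0 < ⟪p l - p i, p j - p i⟫ := by
  rcases eq_or_ne l j with rfl | hlj
  · have : p l - p i ≠ 0 := sub_ne_zero.mpr (hinj.ne hli)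
    rw [real_inner_self_eq_norm_sq]
    positivity
  · exact hacute l i j hli hij hlj

def centroidDir (p : Fin m → F) (i : Fin m) : F := ∑ l, (p l - p i)

theorem inner_centroidDir_pos (hinj : Function.Injective p)
    (hacute : ∀ i j l : Fin m, i ≠ j → j ≠ l → i ≠ l → 0 < ⟪p i - p j, p l - p j⟫)
    {i j : Fin m} (hij : i ≠ j) : 0 < ⟪centroidDir p i, p j - p i⟫ := by
  rw [centroidDir, sum_inner]
  refine Finset.sum_pos' (fun l _ => ?_)
    ⟨j, Finset.mem_univ j, inner_sub_sub_pos_of_acute hinj hacute hij.symm hij⟩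
  rcases eq_or_ne l i with rfl | hli
  · simp
  · exact (inner_sub_sub_pos_of_acute hinj hacute hli hij).le

end Acute

theorem exists_scaling_of_pos {ι : Type*} [Finite ι] (γ : ι → ℝ) (hγ : ∀ x, 0 < γ x) :
    ∃ T Q : ℝ, 1 < Q ∧ ∀ x, 1 < T * γ x * (Q + 1) ∧ T * γ x * (Q + 1) < Q := by
  rcases isEmpty_or_nonempty ι with hι | hι
  · exact ⟨1, 2, one_lt_two, fun x => isEmptyElim x⟩
  obtain ⟨x₀, hx₀⟩ := Finite.exists_min γ
  obtain ⟨x₁, hx₁⟩ := Finite.exists_max γ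
  have h₀ := hγ x₀
  set Q := 2 * (γ x₁ / γ x₀) + 1
  have hQ : 1 < Q := by have := div_pos (hγ x₁) h₀; linarith
  refine ⟨2 / (γ x₀ * (Q + 1)), Q, hQ, fun x => ?_⟩
  have hx : 2 / (γ x₀ * (Q + 1)) * γ x * (Q + 1) = 2 * (γ x / γ x₀) := by
    field_simp
  rw [hx]
  have h₁ : 1 ≤ γ x / γ x₀ := (one_le_div h₀).mpr (hx₀ x)
  have h₂ : γ x / γ x₀ ≤ γ x₁ / γ x₀ := div_le_div_of_nonneg_right (hx₁ x) h₀.le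
  constructor <;> linarith

theorem sub_mul_sub_pos_of_separated {t Q x y : ℝ} (ht₁ : 1 < t * (Q + 1)) (ht₂ : t * (Q + 1) < Q)
    (hx : 0 < x) (hy : 0 < y) (hxy : Q * y ≤ x ∨ Q * x ≤ y) :
    0 < (x - y) * (t * (x + y) - y) := by
  have hQ : 1 < Q := ht₁.trans ht₂
  have ht : 0 < t := by nlinarith
  rcases hxy with h | h
  · apply mul_pos <;> nlinarith
  · apply mul_pos_of_neg_of_neg <;> nlinarith

section Parabola

variable {F : Type*} [NormedAddCommGroup F] [InnerProductSpace ℝ F] {m : ℕ}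
  (p : Fin m → F) (T : ℝ)

noncomputable def parabolaPt (i : Fin m) (c : ℝ) : WithLp 2 (F × Euc m) :=
  WithLp.toLp 2 (p i + (T * c ^ 2) • centroidDir p i, EuclideanSpace.single i c)

variable {p T}

theorem eq_and_eq_of_parabolaPt_eq {i j : Fin m} {x y : ℝ} (h : parabolaPt p T i x = parabolaPt p T j y)
    (hx : x ≠ 0) : i = j ∧ x = y := by
  have h₂ := congrArg (fun v => (WithLp.ofLp v).2 i) h
  simp only [parabolaPt, PiLp.single_apply, if_true] at h₂
  have hij : i = j := by
    by_contra hij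
    exact hx (by simpa [hij] using h₂)
  subst hij
  simpa using h₂

theorem inner_parabolaPt (i j l : Fin m) (x y z : ℝ) :
    ⟪parabolaPt p T l x - parabolaPt p T i y, parabolaPt p T j z - parabolaPt p T i y⟫ =
      ⟪(p l + (T * x ^ 2) • centroidDir p l) - (p i + (T * y ^ 2) • centroidDir p i),
        (p j + (T * z ^ 2) • centroidDir p j) - (p i + (T * y ^ 2) • centroidDir p i)⟫ +
      ⟪EuclideanSpace.single l x - EuclideanSpace.single i y,
        EuclideanSpace.single j z - EuclideanSpace.single i y⟫ :=
  rfl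

theorem inner_single_sub_single {i j l : Fin m} (hij : i ≠ j) (x y z : ℝ) :
    ⟪EuclideanSpace.single l x - EuclideanSpace.single i y,
        EuclideanSpace.single j z - EuclideanSpace.single i y⟫ =
      (if l = j then x * z else 0) - (if l = i then x * y else 0) + y ^ 2 := by
  simp only [inner_sub_left, inner_sub_right, EuclideanSpace.inner_single_left,
    PiLp.single_apply]
  split_ifs <;> simp_all <;> ring

end Parabola

section Eventually

variable {F : Type*} [NormedAddCommGroup F] [InnerProductSpace ℝ F] {m : ℕ}
  {p : Fin m → F} {T : ℝ}

theorem eventually_inner_parabolaPt_pos {i j l : Fin m} (hli : l ≠ i) (hij : i ≠ j) {x y z : ℝ}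
    (hx : 0 ≤ x) (hz : 0 ≤ z) (h : 0 < ⟪p l - p i, p j - p i⟫) :
    ∀ᶠ δ in 𝓝[>] 0, 0 < ⟪parabolaPt p T l (δ * x) - parabolaPt p T i (δ * y),
      parabolaPt p T j (δ * z) - parabolaPt p T i (δ * y)⟫ := by
  set f : ℝ → ℝ := fun δ =>
    ⟪(p l + (T * (δ * x) ^ 2) • centroidDir p l) - (p i + (T * (δ * y) ^ 2) • centroidDir p i),
      (p j + (T * (δ * z) ^ 2) • centroidDir p j) - (p i + (T * (δ * y) ^ 2) • centroidDir p i)⟫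
  have hf : Continuous f := by fun_prop
  filter_upwards [self_mem_nhdsWithin, eventually_nhdsWithin_of_eventually_nhds
      ((hf.tendsto 0).eventually_const_lt (by simpa [f] using h))]
    with δ (hδ : 0 < δ) hfδ
  rw [inner_parabolaPt, inner_single_sub_single hij, if_neg hli]
  have : 0 ≤ if l = j then δ * x * (δ * z) else 0 := by split_ifs <;> positivity
  have := sq_nonneg (δ * y)
  linarith

theorem inner_parabolaPt_sub_same {i j : Fin m} (hij : i ≠ j) (x y z : ℝ) :
    ⟪parabolaPt p T i x - parabolaPt p T i y, parabolaPt p T j z - parabolaPt p T i y⟫ =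
      (x - y) * (T * ⟪centroidDir p i, p j - p i + ((T * z ^ 2) • centroidDir p j -
        (T * y ^ 2) • centroidDir p i)⟫ * (x + y) - y) := by
  have h₁ : (p i + (T * x ^ 2) • centroidDir p i) - (p i + (T * y ^ 2) • centroidDir p i) =
      (T * (x ^ 2 - y ^ 2)) • centroidDir p i := by module
  have h₂ : (p j + (T * z ^ 2) • centroidDir p j) - (p i + (T * y ^ 2) • centroidDir p i) =
      p j - p i + ((T * z ^ 2) • centroidDir p j - (T * y ^ 2) • centroidDir p i) := by abel
  rw [inner_parabolaPt, inner_single_sub_single hij, if_neg hij, if_pos rfl, h₁, h₂,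
    real_inner_smul_left]
  ring

theorem eventually_inner_parabolaPt_same_pos {i j : Fin m} (hij : i ≠ j) {x y z : ℝ}
    (h : 0 < (x - y) * (T * ⟪centroidDir p i, p j - p i⟫ * (x + y) - y)) :
    ∀ᶠ δ in 𝓝[>] 0, 0 < ⟪parabolaPt p T i (δ * x) - parabolaPt p T i (δ * y),
      parabolaPt p T j (δ * z) - parabolaPt p T i (δ * y)⟫ := by
  set f : ℝ → ℝ := fun δ => (x - y) * (T * ⟪centroidDir p i, p j - p i +
    ((T * (δ * z) ^ 2) • centroidDir p j - (T * (δ * y) ^ 2) • centroidDir p i)⟫ * (x + y) - y)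
  have hf : Continuous f := by fun_prop
  filter_upwards [self_mem_nhdsWithin, eventually_nhdsWithin_of_eventually_nhds
      ((hf.tendsto 0).eventually_const_lt (by simpa [f] using h))]
    with δ (hδ : 0 < δ) hfδ
  have : ⟪parabolaPt p T i (δ * x) - parabolaPt p T i (δ * y),
      parabolaPt p T j (δ * z) - parabolaPt p T i (δ * y)⟫ = δ ^ 2 * f δ := by
    rw [inner_parabolaPt_sub_same hij]
    ring
  rw [this]
  exact mul_pos (pow_pos hδ 2) hfδ

end Eventually

theorem mul_pow_le_pow_or_mul_pow_le_pow {Q : ℝ} (hQ : 1 ≤ Q) {s k : ℕ} (hsk : s ≠ k) :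
    Q * Q ^ k ≤ Q ^ s ∨ Q * Q ^ s ≤ Q ^ k := by
  rw [← pow_succ', ← pow_succ']
  rcases hsk.lt_or_gt with h | h
  · exact Or.inr (pow_le_pow_right₀ hQ h)
  · exact Or.inl (pow_le_pow_right₀ hQ h)

theorem exists_parabolaPt_family {F : Type*} [NormedAddCommGroup F] [InnerProductSpace ℝ F]
    {m : ℕ} {p : Fin m → F} (hinj : Function.Injective p)
    (hacute : ∀ i j l : Fin m, i ≠ j → j ≠ l → i ≠ l → 0 < ⟪p i - p j, p l - p j⟫) (N : ℕ) :
    ∃ v : Fin m → Fin N → WithLp 2 (F × Euc m), Function.Injective (Function.uncurry v) ∧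
      ∀ i j, i ≠ j → ∀ k r l s, (l, s) ≠ (i, k) → 0 < ⟪v l s - v i k, v j r - v i k⟫ := by
  obtain ⟨T, Q, hQ, hsep⟩ := exists_scaling_of_pos
    (fun ij : {ij : Fin m × Fin m // ij.1 ≠ ij.2} => ⟪centroidDir p ij.1.1, p ij.1.2 - p ij.1.1⟫)
    (fun ij => inner_centroidDir_pos hinj hacute ij.2)
  have hQ₀ : 0 < Q := one_pos.trans hQ
  let v (δ : ℝ) (i : Fin m) (k : Fin N) := parabolaPt p T i (δ * Q ^ (k : ℕ))
  have hpos : ∀ i j, i ≠ j → ∀ k r l s, (l, s) ≠ (i, k) →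
      ∀ᶠ δ in 𝓝[>] 0, 0 < ⟪v δ l s - v δ i k, v δ j r - v δ i k⟫ := by
    intro i j hij k r l s hls
    rcases eq_or_ne l i with rfl | hli
    · have hsk : (s : ℕ) ≠ k := fun h => hls (by rw [Fin.ext h])
      obtain ⟨h₁, h₂⟩ := hsep ⟨(l, j), hij⟩
      exact eventually_inner_parabolaPt_same_pos hij (sub_mul_sub_pos_of_separated h₁ h₂
        (by positivity) (by positivity) (mul_pow_le_pow_or_mul_pow_le_pow hQ.le hsk))
    · exact eventually_inner_parabolaPt_pos hli hij (by positivity) (by positivity)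
        (inner_sub_sub_pos_of_acute hinj hacute hli hij)
  have hall : ∀ᶠ δ in 𝓝[>] 0, 0 < δ ∧ ∀ i j, i ≠ j → ∀ k r l s, (l, s) ≠ (i, k) →
      0 < ⟪v δ l s - v δ i k, v δ j r - v δ i k⟫ := by
    simp only [eventually_and, eventually_all]
    exact ⟨self_mem_nhdsWithin, hpos⟩
  obtain ⟨δ, hδ, hδpos⟩ := hall.exists
  refine ⟨v δ, ?_, hδpos⟩
  rintro ⟨i, k⟩ ⟨j, r⟩ h
  obtain ⟨rfl, hkr⟩ := eq_and_eq_of_parabolaPt_eq h (by positivity)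
  exact Prod.ext rfl (Fin.ext (pow_right_injective₀ hQ₀ hQ.ne' (mul_left_cancel₀ hδ.ne' hkr)))

theorem containsStrictDNMultipartite_of_family {E : Type*} [NormedAddCommGroup E]
    [InnerProductSpace ℝ E] {n m N : ℕ} (f : E →ₗᵢ[ℝ] Euc n) (v : Fin m → Fin N → E)
    (hinj : Function.Injective (Function.uncurry v))
    (hpos : ∀ i j, i ≠ j → ∀ k r l s, (l, s) ≠ (i, k) → 0 < ⟪v l s - v i k, v j r - v i k⟫) :
    ContainsStrictDNMultipartite n m N := by
  classical
  set u : Fin m → Fin N → Euc n := fun i k => f (v i k)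
  have hu : ∀ {i k j r}, u i k = u j r → i = j ∧ k = r := fun h =>
    Prod.mk.inj (hinj (f.injective h))
  have hinner : ∀ i j l k r s, ⟪u l s - u i k, u j r - u i k⟫ = ⟪v l s - v i k, v j r - v i k⟫ :=
    fun _ _ _ _ _ _ => by simp only [u, ← map_sub, f.inner_map_map]
  refine ⟨Finset.univ.image (fun ik : Fin m × Fin N => u ik.1 ik.2),
    fun i => Finset.univ.image (u i), ?_, ?_, ?_, ?_⟩
  · intro i
    simp [Finset.subset_iff]
  · intro i
    rw [Finset.card_image_of_injective _ (fun k r h => (hu h).2), Finset.card_fin]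
  · intro i j hij
    simp only [Finset.disjoint_left, Finset.mem_image, Finset.mem_univ, true_and]
    rintro _ ⟨k, rfl⟩ ⟨r, h⟩
    exact hij (hu h).1.symm
  · intro i j hij _ hx _ hy
    obtain ⟨k, -, rfl⟩ := Finset.mem_image.mp hx
    obtain ⟨r, -, rfl⟩ := Finset.mem_image.mp hy
    refine ⟨fun h => hij (hu h).1, by simp, by simp, ?_⟩
    simp only [Finset.mem_image, Finset.mem_univ, true_and]
    rintro _ ⟨⟨l, s⟩, rfl⟩ hik hjr
    rw [hinner, hinner]
    exact ⟨hpos i j hij k r l s (fun h => hik (by simp_all)),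
      hpos j i hij.symm r k l s (fun h => hjr (by simp_all))⟩

theorem stmt2_general (d m : ℕ) (p : Fin m → Euc d)
    (hinj : Function.Injective p)
    (hacute : ∀ i j l : Fin m, i ≠ j → j ≠ l → i ≠ l →
      0 < ⟪p i - p j, p l - p j⟫) :
    ∀ N : ℕ, ContainsStrictDNMultipartite (d + m) m N := by
  intro N
  obtain ⟨v, hv_inj, hv_pos⟩ := exists_parabolaPt_family hinj hacute N
  exact containsStrictDNMultipartite_of_family
    ((PiLp.sumPiLpEquivProdLpPiLp 2 fun _ : Fin d ⊕ Fin m => ℝ).symm.trans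
      (LinearIsometryEquiv.piLpCongrLeft 2 ℝ ℝ finSumFinEquiv)).toLinearIsometry v hv_inj hv_pos

theorem stmt2 (d m : ℕ) (hm : 2 ≤ m) (p : Fin m → Euc d)
    (hinj : Function.Injective p)
    (hacute : ∀ i j l : Fin m, i ≠ j → j ≠ l → i ≠ l →
      0 < ⟪p i - p j, p l - p j⟫) :
    ∀ N : ℕ, ContainsStrictDNMultipartite (d + m) m N :=
  stmt2_general d m p hinj hacute
end

section
/- For every η > 0 there exist θ₀ > 0 and c > 0 such that the following holds. Let S be the circle in the Euclidean plane ℝ² with center O and radius R > 0, let B ∈ S, and let A be a point in the open disk bounded by S with A ≠ B. Suppose that the angle ∠OBA between the vectors O − B and A − B is at most θ₀ and that ‖A − B‖ ≤ c·R. Let P₁ and P₂ be the two intersection points of S with the line through A perpendicular to the segment AB. Then ‖A − B‖ ≤ η·‖A − P₁‖ and ‖A − B‖ ≤ η·‖A − P₂‖. -/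
open scoped RealInnerProductSpace

set_option maxHeartbeats 2000000 in
lemma key_aux (η : ℝ) (hη : 0 < η) (O B A P : Euc 2) (R : ℝ)
    (hR : 0 < R) (hB : dist B O = R) (hAB : A ≠ B)
    (hθ : InnerProductGeometry.angle (O - B) (A - B) ≤ min 1 (η / 8))
    (hc : ‖A - B‖ ≤ min (1 / 2) (η ^ 2 / 8) * R)
    (hP : dist P O = R) (hperp : ⟪P - A, B - A⟫ = 0) :
    ‖A - B‖ ≤ η * ‖A - P‖ := by
  obtain ⟨θ, hθdef⟩ : ∃ θ : ℝ, θ = InnerProductGeometry.angle (O - B) (A - B) := ⟨_, rfl⟩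
  rw [← hθdef] at hθ
  obtain ⟨w, hw⟩ : ∃ w : Euc 2, w = P - A := ⟨_, rfl⟩
  obtain ⟨u, hu⟩ : ∃ u : Euc 2, u = A - B := ⟨_, rfl⟩
  obtain ⟨z, hz⟩ : ∃ z : Euc 2, z = O - B := ⟨_, rfl⟩
  obtain ⟨t, htdef⟩ : ∃ t : ℝ, t = ‖A - B‖ := ⟨_, rfl⟩
  obtain ⟨s, hsdef⟩ : ∃ s : ℝ, s = ‖A - P‖ := ⟨_, rfl⟩
  rw [← htdef] at hc
  rw [← htdef, ← hsdef]
  have hut : ‖u‖ = t := by rw [hu, htdef]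
  have hws : ‖w‖ = s := by rw [hw, norm_sub_rev, hsdef]
  have ht : 0 < t := by rw [htdef, norm_pos_iff, sub_ne_zero]; exact hAB
  have hs0 : 0 ≤ s := hsdef ▸ norm_nonneg _
  have hzR : ‖z‖ = R := by rw [hz, norm_sub_rev, ← dist_eq_norm]; exact hB
  have hθ0 : 0 ≤ θ := hθdef ▸ InnerProductGeometry.angle_nonneg _ _
  have hθπ : θ ≤ Real.pi := hθdef ▸ InnerProductGeometry.angle_le_pi _ _
  have hsin0 : 0 ≤ Real.sin θ := Real.sin_nonneg_of_nonneg_of_le_pi hθ0 hθπ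
  have hsin : Real.sin θ ≤ η / 8 :=
    le_trans (Real.sin_le hθ0) (le_trans hθ (min_le_right _ _))
  have hθ1 : θ ≤ 1 := le_trans hθ (min_le_left _ _)
  have hcos : (1 : ℝ) / 2 ≤ Real.cos θ := by
    have h1 := Real.one_sub_sq_div_two_le_cos (x := θ)
    nlinarith [sq_nonneg θ]
  have ht1 : t ≤ R / 2 := le_trans hc (by nlinarith [min_le_left (1/2 : ℝ) (η ^ 2 / 8)])
  have ht2 : t ≤ η ^ 2 / 8 * R := le_trans hc (by nlinarith [min_le_right (1/2 : ℝ) (η ^ 2 / 8)])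
  have hperp' : ⟪w, u⟫ = 0 := by
    rw [hw, hu]
    have : (A - B : Euc 2) = -(B - A) := by abel
    rw [this, inner_neg_right, hperp, neg_zero]
  have hcosi : ⟪z, u⟫ = R * t * Real.cos θ := by
    have h := InnerProductGeometry.cos_angle (O - B) (A - B)
    rw [← hθdef, ← hz, ← hu, hzR, hut] at h
    rw [eq_div_iff (by positivity : R * t ≠ 0)] at h
    linarith
  have hOB : ⟪z, z⟫ = R ^ 2 := by rw [real_inner_self_eq_norm_sq, hzR]
  have hABi : ⟪u, u⟫ = t ^ 2 := by rw [real_inner_self_eq_norm_sq, hut]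
  have hPAi : ⟪w, w⟫ = s ^ 2 := by rw [real_inner_self_eq_norm_sq, hws]
  have hPO : ⟪w + u - z, w + u - z⟫ = R ^ 2 := by
    have : w + u - z = P - O := by rw [hw, hu, hz]; abel
    rw [this, real_inner_self_eq_norm_sq, ← dist_eq_norm, hP]
  have hid : s ^ 2 = 2 * ⟪w, z⟫ + 2 * (R * t * Real.cos θ) - t ^ 2 := by
    simp only [inner_sub_left, inner_sub_right, inner_add_left, inner_add_right] at hPO
    have c1 : ⟪u, w⟫ = (0 : ℝ) := by rw [real_inner_comm]; exact hperp'
    have c2 : ⟪z, w⟫ = ⟪w, z⟫ := real_inner_comm _ _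
    have c3 : ⟪u, z⟫ = R * t * Real.cos θ := by rw [real_inner_comm]; exact hcosi
    have c4 : ⟪w, u⟫ = (0 : ℝ) := hperp'
    rw [c1, c2, c3, c4, hcosi, hABi, hPAi, hOB] at hPO
    linarith
  have hproj : -(s * (R * Real.sin θ)) ≤ ⟪w, z⟫ := by
    obtain ⟨z', hz'⟩ : ∃ z' : Euc 2, z' = t • z - (R * Real.cos θ) • u := ⟨_, rfl⟩
    have hwz : ⟪w, z'⟫ = t * ⟪w, z⟫ := by
      rw [hz', inner_sub_right, real_inner_smul_right, real_inner_smul_right, hperp']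
      ring
    have hsc : Real.sin θ ^ 2 = 1 - Real.cos θ ^ 2 := by
      have := Real.sin_sq_add_cos_sq θ
      linarith
    have hz'sq : ⟪z', z'⟫ = (t * (R * Real.sin θ)) ^ 2 := by
      rw [hz']
      simp only [inner_sub_left, inner_sub_right, real_inner_smul_left, real_inner_smul_right]
      have c5 : ⟪u, z⟫ = R * t * Real.cos θ := (real_inner_comm z u).trans hcosi
      rw [hOB, hABi, hcosi, c5]
      linear_combination (-(t ^ 2 * R ^ 2)) * hsc
    have hz'norm : ‖z'‖ = t * (R * Real.sin θ) := by
      have h1 : ‖z'‖ ^ 2 = (t * (R * Real.sin θ)) ^ 2 := by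
        rw [← real_inner_self_eq_norm_sq]; exact hz'sq
      have h2 : 0 ≤ t * (R * Real.sin θ) := mul_nonneg ht.le (mul_nonneg hR.le hsin0)
      nlinarith [norm_nonneg z']
    have hcs : |⟪w, z'⟫| ≤ ‖w‖ * ‖z'‖ := abs_real_inner_le_norm _ _
    rw [hwz, hz'norm, hws] at hcs
    have h3 := neg_abs_le (t * ⟪w, z⟫)
    have h4 : -(s * (t * (R * Real.sin θ))) ≤ t * ⟪w, z⟫ := by
      calc -(s * (t * (R * Real.sin θ))) ≤ -|t * ⟪w, z⟫| := by linarith [hcs]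
        _ ≤ t * ⟪w, z⟫ := h3
    nlinarith [h4]
  -- final arithmetic
  by_contra hcon
  push_neg at hcon
  have hηs : η * s < t := hcon
  have key1 : s ^ 2 + 2 * (s * (R * Real.sin θ)) + t ^ 2 ≥ 2 * (R * t * Real.cos θ) := by
    linarith [hid, hproj]
  have b1 : s * R * Real.sin θ ≤ s * R * (η / 8) :=
    mul_le_mul_of_nonneg_left hsin (mul_nonneg hs0 hR.le)
  have b2 : η * s * R < t * R := mul_lt_mul_of_pos_right hηs hR
  have b3 : η ^ 2 * s ^ 2 < t ^ 2 := by
    have h := mul_lt_mul'' hηs hηs (mul_nonneg hη.le hs0) (mul_nonneg hη.le hs0)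
    calc η ^ 2 * s ^ 2 = (η * s) * (η * s) := by ring
      _ < t * t := h
      _ = t ^ 2 := by ring
  have b4 : t ^ 2 ≤ η ^ 2 * (R * t / 8) := by
    calc t ^ 2 = t * t := by ring
      _ ≤ (η ^ 2 / 8 * R) * t := mul_le_mul_of_nonneg_right ht2 ht.le
      _ = η ^ 2 * (R * t / 8) := by ring
  have b5 : s ^ 2 < R * t / 8 := by
    have h5 : η ^ 2 * s ^ 2 < η ^ 2 * (R * t / 8) := lt_of_lt_of_le b3 b4
    exact lt_of_mul_lt_mul_left h5 (by positivity)
  have L1 : t ^ 2 ≤ R / 2 * t := by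
    calc t ^ 2 = t * t := by ring
      _ ≤ (R / 2) * t := mul_le_mul_of_nonneg_right ht1 ht.le
  have L2 : R * t ≤ 2 * (R * t * Real.cos θ) := by
    have := mul_le_mul_of_nonneg_left hcos (by positivity : (0:ℝ) ≤ 2 * (R * t))
    linarith [this]
  linarith [key1, b1, b2, b5, L1, L2, mul_pos hR ht]

theorem stmt8 (η : ℝ) (hη : 0 < η) :
    ∃ θ₀ : ℝ, 0 < θ₀ ∧ ∃ c : ℝ, 0 < c ∧
      ∀ (O B A P₁ P₂ : Euc 2) (R : ℝ),
        0 < R → dist B O = R → dist A O < R → A ≠ B →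
        InnerProductGeometry.angle (O - B) (A - B) ≤ θ₀ →
        ‖A - B‖ ≤ c * R →
        dist P₁ O = R → dist P₂ O = R → P₁ ≠ P₂ →
        ⟪P₁ - A, B - A⟫ = 0 → ⟪P₂ - A, B - A⟫ = 0 →
        ‖A - B‖ ≤ η * ‖A - P₁‖ ∧ ‖A - B‖ ≤ η * ‖A - P₂‖ := by
  refine ⟨min 1 (η / 8), by positivity, min (1 / 2) (η ^ 2 / 8), by positivity, ?_⟩
  intro O B A P₁ P₂ R hR hB hA hAB hθ hc hP₁ hP₂ _ h1 h2
  exact ⟨key_aux η hη O B A P₁ R hR hB hAB hθ hc hP₁ h1,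
         key_aux η hη O B A P₂ R hR hB hAB hθ hc hP₂ h2⟩
end

section
/- Let a, p, q, r be points in Euclidean space ℝ^d such that the triple {a, p, q} is affinely independent and the triple {a, p, r} is affinely independent, and suppose ⟪q − p, a − p⟫ ≥ 0, ⟪r − p, a − p⟫ ≥ 0, ⟪r − p, q − p⟫ ≥ 0, ⟪r − q, p − q⟫ ≥ 0, and ⟪q − r, p − r⟫ ≥ 0. Let γ_b be the two-dimensional affine plane through a, p, r and γ_a the two-dimensional affine plane through a, p, q. Then at least one of the following holds: (i) the orthogonal projection of q onto γ_b lies in the closed half-plane of γ_b bounded by the line through p and r that contains a, i.e., ⟪proj_{γ_b}(q) − p, w⟫ ≥ 0 for the unit vector w in the direction space of γ_b with ⟪w, r − p⟫ = 0 and ⟪w, a − p⟫ > 0; or (ii) the orthogonal projection of r onto γ_a lies in the closed half-plane of γ_a bounded by the line through p and q that contains a, i.e., ⟪proj_{γ_a}(r) − p, w'⟫ ≥ 0 for the unit vector w' in the direction space of γ_a with ⟪w', q − p⟫ = 0 and ⟪w', a − p⟫ > 0. -/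
open scoped RealInnerProductSpace

lemma stmt9_aux {d : ℕ} (b u v w : Euc d) (hu : u ≠ 0) (s t : ℝ)
    (hw : s • b + t • u = w)
    (hwu : ⟪w, u⟫ = 0) (hwb : 0 < ⟪w, b⟫) (hvw : ⟪v, w⟫ < 0) :
    ⟪v, b⟫ * ⟪u, u⟫ < ⟪b, u⟫ * ⟪v, u⟫ := by
  have hu2 : 0 < ⟪u, u⟫ := real_inner_self_nonneg.lt_of_ne' (fun h => hu (inner_self_eq_zero.mp h))
  have e1 : s * ⟪b, u⟫ + t * ⟪u, u⟫ = 0 := by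
    rw [← hwu, ← hw, inner_add_left, real_inner_smul_left, real_inner_smul_left]
  have e2 : 0 < s * ⟪b, b⟫ + t * ⟪u, b⟫ := by
    rw [← hw, inner_add_left, real_inner_smul_left, real_inner_smul_left] at hwb
    exact hwb
  have e3 : s * ⟪v, b⟫ + t * ⟪v, u⟫ < 0 := by
    rw [← hw, inner_add_right, real_inner_smul_right, real_inner_smul_right] at hvw
    exact hvw
  have cauchy := real_inner_mul_inner_self_le b u
  have hc1 : ⟪u, b⟫ = ⟪b, u⟫ := real_inner_comm b u
  rw [hc1] at e2
  have e1b : (s * ⟪b, u⟫ + t * ⟪u, u⟫) * ⟪b, u⟫ = 0 := by rw [e1]; ring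
  have hs : 0 < s := by nlinarith [mul_pos e2 hu2, e1b, cauchy]
  have e3b : (s * ⟪v, b⟫ + t * ⟪v, u⟫) * ⟪u, u⟫ < 0 := mul_neg_of_neg_of_pos e3 hu2
  have e1c : (s * ⟪b, u⟫ + t * ⟪u, u⟫) * ⟪v, u⟫ = 0 := by rw [e1]; ring
  nlinarith [e3b, e1c, hs]

lemma stmt9_span {d : ℕ} (a p r : Euc d) :
    (affineSpan ℝ ({a, p, r} : Set (Euc d))).direction ≤
      Submodule.span ℝ {a - p, r - p} := by
  rw [direction_affineSpan,
    vectorSpan_eq_span_vsub_set_right ℝ (show p ∈ ({a, p, r} : Set (Euc d)) by simp)]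
  apply Submodule.span_le.2
  rintro x ⟨y, hy, rfl⟩
  simp only [Set.mem_insert_iff, Set.mem_singleton_iff] at hy
  rcases hy with rfl | rfl | rfl
  · exact Submodule.subset_span (by simp [vsub_eq_sub])
  · simp only [vsub_eq_sub, sub_self]
    exact Submodule.zero_mem _
  · exact Submodule.subset_span (by simp [vsub_eq_sub])

theorem stmt9 {d : ℕ} (a p q r : Euc d)
    (h1 : AffineIndependent ℝ ![a, p, q])
    (h2 : AffineIndependent ℝ ![a, p, r])
    (hqpa : 0 ≤ ⟪q - p, a - p⟫) (hrpa : 0 ≤ ⟪r - p, a - p⟫)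
    (hrpq : 0 ≤ ⟪r - p, q - p⟫) (hrqp : 0 ≤ ⟪r - q, p - q⟫)
    (hqrp : 0 ≤ ⟪q - r, p - r⟫)
    (qb rb w w' : Euc d)
    (hqbmem : qb ∈ affineSpan ℝ ({a, p, r} : Set (Euc d)))
    (hqbperp : ∀ v ∈ (affineSpan ℝ ({a, p, r} : Set (Euc d))).direction,
      ⟪q - qb, v⟫ = 0)
    (hrbmem : rb ∈ affineSpan ℝ ({a, p, q} : Set (Euc d)))
    (hrbperp : ∀ v ∈ (affineSpan ℝ ({a, p, q} : Set (Euc d))).direction,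
      ⟪r - rb, v⟫ = 0)
    (hwmem : w ∈ (affineSpan ℝ ({a, p, r} : Set (Euc d))).direction)
    (hwnorm : ‖w‖ = 1) (hwr : ⟪w, r - p⟫ = 0) (hwa : 0 < ⟪w, a - p⟫)
    (hw'mem : w' ∈ (affineSpan ℝ ({a, p, q} : Set (Euc d))).direction)
    (hw'norm : ‖w'‖ = 1) (hw'q : ⟪w', q - p⟫ = 0) (hw'a : 0 < ⟪w', a - p⟫) :
    0 ≤ ⟪qb - p, w⟫ ∨ 0 ≤ ⟪rb - p, w'⟫ := by
  by_contra hcon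
  push_neg at hcon
  obtain ⟨hq, hr⟩ := hcon
  -- nondegeneracy
  have hpr : r - p ≠ 0 := by
    intro h
    have h' : (![a, p, r] : Fin 3 → Euc d) 1 = ![a, p, r] 2 := by
      simp [sub_eq_zero] at h
      simp [h]
    have := h2.injective h'
    simp at this
  have hpq : q - p ≠ 0 := by
    intro h
    have h' : (![a, p, q] : Fin 3 → Euc d) 1 = ![a, p, q] 2 := by
      simp [sub_eq_zero] at h
      simp [h]
    have := h1.injective h'
    simp at this
  -- projection transfer
  have hq0 := hqbperp w hwmem
  have keyq : ⟪qb - p, w⟫ = ⟪q - p, w⟫ := by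
    have h' : (q - p) - (q - qb) = qb - p := by abel
    rw [← h', inner_sub_left, hq0, sub_zero]
  have hr0 := hrbperp w' hw'mem
  have keyr : ⟪rb - p, w'⟫ = ⟪r - p, w'⟫ := by
    have h' : (r - p) - (r - rb) = rb - p := by abel
    rw [← h', inner_sub_left, hr0, sub_zero]
  -- decompose w and w'
  obtain ⟨s, t, hw_eq⟩ := Submodule.mem_span_pair.mp (stmt9_span a p r hwmem)
  obtain ⟨s', t', hw'_eq⟩ := Submodule.mem_span_pair.mp (stmt9_span a p q hw'mem)
  have A := stmt9_aux (a - p) (r - p) (q - p) w hpr s t hw_eq hwr hwa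
    (keyq ▸ hq)
  have B := stmt9_aux (a - p) (q - p) (r - p) w' hpq s' t' hw'_eq hw'q hw'a
    (keyr ▸ hr)
  rw [real_inner_comm (r - p) (a - p), real_inner_comm (r - p) (q - p)] at A
  rw [real_inner_comm (q - p) (a - p)] at B
  have cauchy := real_inner_mul_inner_self_le (r - p) (q - p)
  have hAB := mul_lt_mul'' A B
    (mul_nonneg hqpa real_inner_self_nonneg)
    (mul_nonneg hrpa real_inner_self_nonneg)
  nlinarith [hAB, cauchy, mul_nonneg hqpa hrpa]
end

section
/- Let C be the circle of radius R > 0 centered at c in the Euclidean plane ℝ², let p ∈ C, and let q be the point of C antipodal to p. Let a and b be points lying strictly between p and q on the segment pq. Then for every N ∈ ℕ and every ε > 0 there exist N distinct points x₁, …, x_N on C, each at distance less than ε from p and each different from p, such that for every point z on the segment [a, b] and all distinct indices s, l ∈ {1, …, N}, the angle ∠z x_s x_l is acute, i.e., ⟪z − x_s, x_l − x_s⟫ > 0. -/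
open scoped RealInnerProductSpace

/-!
Put `u = p - c`, choose `v ⟂ u` with `‖v‖ = ‖u‖`, and parametrise the circle rationally by
`X s = c + ((1 - s²) • u + 2s • v) / (1 + s²)`, so that `X 0 = p`. Points of the open diameter
are `c + t • u` with `|t| < 1`, and
`⟪c + t • u - X s, X m - X s⟫ = 2‖u‖² (s - m) ((s - m) + t (s + m)) / ((1 + s²) (1 + m²))`,
which is positive once `|t| (s + m) < |s - m|`. If `|t| ≤ κ < 1` on `[a, b]`, small parameters
in geometric progression with ratio `2 / (1 - κ)` satisfy this for every pair.
-/

theorem mul_add_pos_of_abs_lt {d e : ℝ} (h : |e| < |d|) : 0 < d * (d + e) := by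
  cases abs_cases d <;> cases abs_cases e <;> nlinarith

theorem exists_fin_lacunary (N : ℕ) {κ ε : ℝ} (hκ₀ : 0 ≤ κ) (hκ₁ : κ < 1) (hε : 0 < ε) :
    ∃ S : Fin N → ℝ, (∀ i, 0 < S i ∧ S i < ε) ∧ ∀ i j, i ≠ j → κ * (S i + S j) < |S i - S j| := by
  obtain ⟨r, hr, hκr⟩ : ∃ r : ℝ, 1 < r ∧ (1 - κ) * r = 2 :=
    ⟨2 / (1 - κ), by rw [lt_div_iff₀ (by linarith)]; linarith, mul_div_cancel₀ _ (by linarith)⟩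
  obtain ⟨S, hSdef⟩ : ∃ S : Fin N → ℝ, ∀ i, S i = ε / r ^ N * r ^ (i : ℕ) := ⟨_, fun _ => rfl⟩
  have hS : ∀ i, 0 < S i ∧ S i < ε := fun i => by
    rw [hSdef]
    refine ⟨by positivity, ?_⟩
    calc ε / r ^ N * r ^ (i : ℕ) < ε / r ^ N * r ^ N := by gcongr; exact i.isLt
      _ = ε := div_mul_cancel₀ _ (by positivity)
  have hlt : ∀ i j : Fin N, i < j → κ * (S i + S j) < S j - S i := by
    intro i j hij
    have hrS : r * S i ≤ S j := by
      calc r * S i = ε / r ^ N * r ^ ((i : ℕ) + 1) := by rw [hSdef]; ring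
        _ ≤ S j := by rw [hSdef]; gcongr; exacts [hr.le, hij]
    have : (1 - κ) * (r * S i) ≤ (1 - κ) * S j := by gcongr
    nlinarith [(hS i).1]
  refine ⟨S, hS, fun i j hij => ?_⟩
  rcases lt_or_gt_of_ne hij with h | h
  · rw [abs_sub_comm]; exact (hlt i j h).trans_le (le_abs_self _)
  · rw [add_comm]; exact (hlt j i h).trans_le (le_abs_self _)

section

variable {V : Type*} [AddCommGroup V] [Module ℝ V]

theorem Sbtw.exists_abs_lt_eq_add_smul {c p y : V} (h : Sbtw ℝ p y ((2 : ℝ) • c - p)) :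
    ∃ t : ℝ, |t| < 1 ∧ y = c + t • (p - c) := by
  obtain ⟨θ, ⟨hθ₀, hθ₁⟩, rfl⟩ := h.mem_image_Ioo
  refine ⟨1 - 2 * θ, abs_lt.mpr ⟨by linarith, by linarith⟩, ?_⟩
  rw [AffineMap.lineMap_apply_module]
  module

theorem exists_abs_le_eq_add_smul_of_mem_segment {c u z : V} {ta tb : ℝ}
    (hz : z ∈ segment ℝ (c + ta • u) (c + tb • u)) :
    ∃ t : ℝ, |t| ≤ max |ta| |tb| ∧ z = c + t • u := by
  obtain ⟨μ, ν, hμ, hν, hμν, rfl⟩ := hz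
  refine ⟨μ * ta + ν * tb, ?_, ?_⟩
  · calc |μ * ta + ν * tb| ≤ μ * |ta| + ν * |tb| := (abs_add_le _ _).trans_eq <| by
          rw [abs_mul, abs_mul, abs_of_nonneg hμ, abs_of_nonneg hν]
      _ ≤ μ * max |ta| |tb| + ν * max |ta| |tb| := by gcongr <;> simp
      _ = max |ta| |tb| := by rw [← add_mul, hμν, one_mul]
  · linear_combination (norm := module) hμν • c

end

section

variable {E : Type*} [NormedAddCommGroup E] [InnerProductSpace ℝ E]

theorem exists_inner_eq_zero_norm_eq (h : 2 ≤ Module.finrank ℝ E) (u : E) :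
    ∃ v : E, ⟪u, v⟫ = 0 ∧ ‖v‖ = ‖u‖ := by
  have hK : (ℝ ∙ u)ᗮ ≠ ⊥ := by
    rw [Ne, Submodule.orthogonal_eq_bot_iff]
    intro htop
    have := finrank_span_le_card (R := ℝ) ({u} : Set E)
    rw [htop, finrank_top] at this
    simp only [Set.toFinset_singleton, Finset.card_singleton] at this
    omega
  obtain ⟨w, hw, hw0⟩ := Submodule.exists_mem_ne_zero_of_ne_bot hK
  refine ⟨(‖u‖ / ‖w‖) • w, ?_, ?_⟩
  · rw [inner_smul_right, Submodule.mem_orthogonal_singleton_iff_inner_right.mp hw, mul_zero]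
  · rw [norm_smul, Real.norm_eq_abs, abs_div, abs_norm, abs_norm,
      div_mul_cancel₀ _ (norm_ne_zero_iff.mpr hw0)]

theorem Function.injective_of_inner_sub_pos {ι : Type*} {x : ι → E} {z : E}
    (h : ∀ s l, s ≠ l → 0 < ⟪z - x s, x l - x s⟫) : Function.Injective x := by
  intro s l hsl
  by_contra hne
  have := h s l hne
  rw [hsl, sub_self, inner_zero_right] at this
  exact this.false

theorem inner_smul_add_smul_smul_add_smul {u v : E} (huv : ⟪u, v⟫ = 0) (hv : ‖v‖ = ‖u‖)
    (α β γ δ : ℝ) : ⟪α • u + β • v, γ • u + δ • v⟫ = (α * γ + β * δ) * ‖u‖ ^ 2 := by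
  have hvu : ⟪v, u⟫ = 0 := by rwa [real_inner_comm]
  simp only [inner_add_left, inner_add_right, real_inner_smul_left, real_inner_smul_right,
    real_inner_self_eq_norm_sq, huv, hvu, hv]
  ring

/-- `s = tan (θ / 2)`, where `θ` is the angle from `u` in the plane of `u` and `v`. -/
noncomputable def circleParam (c u v : E) (s : ℝ) : E :=
  c + ((1 - s ^ 2) / (1 + s ^ 2)) • u + (2 * s / (1 + s ^ 2)) • v

variable {c u v : E}

theorem dist_circleParam_center (huv : ⟪u, v⟫ = 0) (hv : ‖v‖ = ‖u‖) (s : ℝ) :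
    dist (circleParam c u v s) c = ‖u‖ := by
  have hs : 0 < 1 + s ^ 2 := by positivity
  have h : circleParam c u v s - c =
      ((1 - s ^ 2) / (1 + s ^ 2)) • u + (2 * s / (1 + s ^ 2)) • v := by
    simp only [circleParam]; abel
  rw [dist_eq_norm, ← sq_eq_sq₀ (norm_nonneg _) (norm_nonneg _), ← real_inner_self_eq_norm_sq, h,
    inner_smul_add_smul_smul_add_smul huv hv]
  field_simp
  ring

theorem dist_circleParam_sq (huv : ⟪u, v⟫ = 0) (hv : ‖v‖ = ‖u‖) (s : ℝ) :
    dist (circleParam c u v s) (c + u) ^ 2 = 4 * ‖u‖ ^ 2 * s ^ 2 / (1 + s ^ 2) := by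
  have hs : 0 < 1 + s ^ 2 := by positivity
  have h : circleParam c u v s - (c + u) =
      ((1 - s ^ 2) / (1 + s ^ 2) - 1) • u + (2 * s / (1 + s ^ 2)) • v := by
    simp only [circleParam]; module
  rw [dist_eq_norm, ← real_inner_self_eq_norm_sq, h, inner_smul_add_smul_smul_add_smul huv hv]
  field_simp
  ring

theorem dist_circleParam_le (huv : ⟪u, v⟫ = 0) (hv : ‖v‖ = ‖u‖) (s : ℝ) :
    dist (circleParam c u v s) (c + u) ≤ 2 * ‖u‖ * |s| := by
  refine le_of_sq_le_sq ?_ (by positivity)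
  rw [dist_circleParam_sq huv hv, div_le_iff₀ (by positivity), mul_pow, sq_abs]
  nlinarith [sq_nonneg (2 * ‖u‖ * s), sq_nonneg s]

theorem circleParam_ne (huv : ⟪u, v⟫ = 0) (hv : ‖v‖ = ‖u‖) (hu : u ≠ 0) {s : ℝ}
    (hs : s ≠ 0) : circleParam c u v s ≠ c + u := by
  rw [← dist_ne_zero, ← sq_pos_iff, dist_circleParam_sq huv hv]
  have : 0 < ‖u‖ := norm_pos_iff.mpr hu
  positivity

theorem inner_sub_circleParam (huv : ⟪u, v⟫ = 0) (hv : ‖v‖ = ‖u‖) (t s m : ℝ) :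
    ⟪c + t • u - circleParam c u v s, circleParam c u v m - circleParam c u v s⟫ =
      2 * ‖u‖ ^ 2 * ((s - m) * ((s - m) + t * (s + m))) / ((1 + s ^ 2) * (1 + m ^ 2)) := by
  have hs : 0 < 1 + s ^ 2 := by positivity
  have hm : 0 < 1 + m ^ 2 := by positivity
  have h₁ : c + t • u - circleParam c u v s =
      (t - (1 - s ^ 2) / (1 + s ^ 2)) • u + (-(2 * s / (1 + s ^ 2))) • v := by
    simp only [circleParam]; module
  have h₂ : circleParam c u v m - circleParam c u v s =
      ((1 - m ^ 2) / (1 + m ^ 2) - (1 - s ^ 2) / (1 + s ^ 2)) • u +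
        (2 * m / (1 + m ^ 2) - 2 * s / (1 + s ^ 2)) • v := by
    simp only [circleParam]; module
  rw [h₁, h₂, inner_smul_add_smul_smul_add_smul huv hv]
  field_simp
  ring

theorem inner_sub_circleParam_pos (huv : ⟪u, v⟫ = 0) (hv : ‖v‖ = ‖u‖) (hu : u ≠ 0)
    {t s m : ℝ} (h : |t * (s + m)| < |s - m|) :
    0 < ⟪c + t • u - circleParam c u v s, circleParam c u v m - circleParam c u v s⟫ := by
  rw [inner_sub_circleParam huv hv]
  have := mul_add_pos_of_abs_lt h
  have : 0 < ‖u‖ := norm_pos_iff.mpr hu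
  positivity

theorem inner_sub_circleParam_pos_of_mem_segment (huv : ⟪u, v⟫ = 0) (hv : ‖v‖ = ‖u‖)
    (hu : u ≠ 0) {ta tb s m : ℝ} (hs : 0 < s) (hm : 0 < m)
    (h : max |ta| |tb| * (s + m) < |s - m|) {z : E}
    (hz : z ∈ segment ℝ (c + ta • u) (c + tb • u)) :
    0 < ⟪z - circleParam c u v s, circleParam c u v m - circleParam c u v s⟫ := by
  obtain ⟨t, ht, rfl⟩ := exists_abs_le_eq_add_smul_of_mem_segment hz
  refine inner_sub_circleParam_pos huv hv hu ?_
  calc |t * (s + m)| = |t| * (s + m) := by rw [abs_mul, abs_of_pos (add_pos hs hm)]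
    _ ≤ max |ta| |tb| * (s + m) := by gcongr
    _ < |s - m| := h

end

theorem stmt11 (c p q a b : Euc 2) (R : ℝ) (hR : 0 < R)
    (hp : dist p c = R) (hq : q = (2 : ℝ) • c - p)
    (ha : Sbtw ℝ p a q) (hb : Sbtw ℝ p b q) :
    ∀ (N : ℕ) (ε : ℝ), 0 < ε →
      ∃ x : Fin N → Euc 2, Function.Injective x ∧
        (∀ s, dist (x s) c = R ∧ dist (x s) p < ε ∧ x s ≠ p) ∧
        (∀ z ∈ segment ℝ a b, ∀ s l : Fin N, s ≠ l →
          0 < ⟪z - x s, x l - x s⟫) := by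
  intro N ε hε
  subst hq
  have hpc : ‖p - c‖ = R := by rw [← dist_eq_norm, hp]
  have hu : p - c ≠ 0 := norm_ne_zero_iff.mp (hpc ▸ hR.ne')
  obtain ⟨v, huv, hv⟩ := exists_inner_eq_zero_norm_eq (by simp) (p - c)
  obtain ⟨ta, hta, rfl⟩ := ha.exists_abs_lt_eq_add_smul
  obtain ⟨tb, htb, rfl⟩ := hb.exists_abs_lt_eq_add_smul
  obtain ⟨S, hS, hsep⟩ := exists_fin_lacunary N (le_max_of_le_left (abs_nonneg ta))
    (max_lt hta htb) (div_pos hε (mul_pos two_pos hR))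
  have hacute : ∀ z ∈ segment ℝ (c + ta • (p - c)) (c + tb • (p - c)), ∀ s l, s ≠ l →
      0 < ⟪z - circleParam c (p - c) v (S s),
        circleParam c (p - c) v (S l) - circleParam c (p - c) v (S s)⟫ := fun z hz s l hsl =>
    inner_sub_circleParam_pos_of_mem_segment huv hv hu (hS s).1 (hS l).1 (hsep s l hsl) hz
  refine ⟨_, Function.injective_of_inner_sub_pos (hacute _ (left_mem_segment ℝ _ _)),
    fun s => ⟨?_, ?_, ?_⟩, hacute⟩
  · rw [dist_circleParam_center huv hv, hpc]
  · calc dist (circleParam c (p - c) v (S s)) p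
        = dist (circleParam c (p - c) v (S s)) (c + (p - c)) := by rw [add_sub_cancel]
      _ ≤ 2 * R * S s := by
        simpa only [hpc, abs_of_pos (hS s).1] using dist_circleParam_le huv hv (S s)
      _ < ε := by rw [← lt_div_iff₀' (by positivity)]; exact (hS s).2
  · simpa only [add_sub_cancel] using circleParam_ne (c := c) huv hv hu (hS s).1.ne'
end

section
/- Let d and k be natural numbers with k ≥ 2 and k + ⌈log₂ k⌉ ≤ d. Then for every δ > 0 and every r ∈ ℕ there exists a finite set V of points in Euclidean space ℝ^d containing k pairwise disjoint subsets V₁, …, V_k, each of cardinality r, such that for any two points x, y lying in different subsets and every z ∈ V with z ≠ x and z ≠ y, both angles ∠zxy and ∠zyx are at most π/2 + δ. -/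
set_option maxHeartbeats 1000000

open scoped RealInnerProductSpace

lemma angle_le_aux {E : Type*} [NormedAddCommGroup E] [InnerProductSpace ℝ E]
    (u v : E) (s : ℝ) (hs : 0 ≤ s)
    (h : -(s * (‖u‖ * ‖v‖)) ≤ ⟪u, v⟫) :
    InnerProductGeometry.angle u v ≤ Real.pi / 2 + Real.arcsin s := by
  rw [InnerProductGeometry.angle, Real.arccos_eq_pi_div_two_sub_arcsin]
  have hle : -s ≤ ⟪u, v⟫ / (‖u‖ * ‖v‖) := by
    rcases eq_or_lt_of_le (mul_nonneg (norm_nonneg u) (norm_nonneg v)) with h0 | h0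
    · rw [← h0, div_zero]; linarith
    · rw [le_div_iff₀ h0]; linarith
  have h2 : Real.arcsin (-s) ≤ Real.arcsin (⟪u, v⟫ / (‖u‖ * ‖v‖)) :=
    Real.monotone_arcsin hle
  rw [Real.arcsin_neg] at h2
  linarith

theorem stmt13 (d k : ℕ) (hk : 2 ≤ k) (hd : k + Nat.clog 2 k ≤ d) :
    ∀ δ : ℝ, 0 < δ → ∀ r : ℕ,
      ∃ (V : Finset (Euc d)) (P : Fin k → Finset (Euc d)),
        (∀ i, P i ⊆ V) ∧ (∀ i, (P i).card = r) ∧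
        (∀ i j, i ≠ j → Disjoint (P i) (P j)) ∧
        (∀ i j, i ≠ j → ∀ x ∈ P i, ∀ y ∈ P j, ∀ z ∈ V, z ≠ x → z ≠ y →
          EuclideanGeometry.angle z x y ≤ Real.pi / 2 + δ ∧
          EuclideanGeometry.angle z y x ≤ Real.pi / 2 + δ) := by
  classical
  intro δ hδ r
  have hclog : 0 < Nat.clog 2 k := Nat.clog_pos one_lt_two hk
  have hkd : k < d := by omega
  set K : Fin d := ⟨k, hkd⟩ with hK
  have hιlt : ∀ i : Fin k, (i : ℕ) < d := fun i => lt_trans i.2 hkd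
  set ι : Fin k → Fin d := fun i => ⟨i, hιlt i⟩ with hι
  have hιinj : Function.Injective ι := by
    intro i j h
    exact Fin.ext (by simpa using congrArg Fin.val h)
  have hιK : ∀ i, ι i ≠ K := by
    intro i h
    have : (i : ℕ) = k := congrArg Fin.val h
    exact absurd this (Nat.ne_of_lt i.2)
  -- parameters
  set δ' : ℝ := min δ 1 with hδ'def
  have hδ'0 : 0 < δ' := lt_min hδ one_pos
  have hδ'δ : δ' ≤ δ := min_le_left _ _
  have hδ'1 : δ' ≤ 1 := min_le_right _ _
  have hpi : (3:ℝ) < Real.pi := Real.pi_gt_three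
  have hδ'pi2 : δ' ≤ Real.pi / 2 := by linarith
  have hsin : 0 < Real.sin δ' := Real.sin_pos_of_pos_of_lt_pi hδ'0 (by linarith)
  have hsin1 : Real.sin δ' ≤ 1 := Real.sin_le_one _
  set ε : ℝ := Real.sin δ' / (r + 1) with hεdef
  have hε : 0 < ε := div_pos hsin (by positivity)
  have hεr : ε * r ≤ Real.sin δ' := by
    rw [hεdef, div_mul_eq_mul_div, div_le_iff₀ (by positivity : (0:ℝ) < (r:ℝ) + 1)]
    nlinarith [hsin.le, Nat.cast_nonneg (α := ℝ) r]
  -- points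
  set A : Fin k → Euc d := fun i => EuclideanSpace.single (ι i) (1:ℝ) with hA
  set w : Euc d := EuclideanSpace.single K (1:ℝ) with hw
  set pt : Fin k → Fin r → Euc d := fun i a => A i + (ε * a) • w with hpt
  -- inner products of singles
  have hss : ∀ m m' : Fin d, ⟪EuclideanSpace.single m (1:ℝ), EuclideanSpace.single m' (1:ℝ)⟫
      = if m = m' then 1 else 0 := by
    intro m m'
    rw [EuclideanSpace.inner_single_left]
    simp [EuclideanSpace.single_apply, eq_comm]
  have hAA : ∀ i j, ⟪A i, A j⟫ = if i = j then 1 else 0 := by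
    intro i j
    rw [hA, hss]
    by_cases h : i = j
    · simp [h]
    · rw [if_neg (fun hh => h (hιinj hh)), if_neg h]
  have hAw : ∀ i, ⟪A i, w⟫ = 0 := by
    intro i; rw [hA, hw, hss]; simp [hιK i]
  have hwA : ∀ i, ⟪w, A i⟫ = 0 := by
    intro i; rw [real_inner_comm]; exact hAw i
  have hww : ⟪w, w⟫ = 1 := by rw [hw, hss]; simp
  have expand : ∀ (x y z : Fin k) (s t : ℝ),
      ⟪(A x - A y) + s • w, (A z - A y) + t • w⟫ =
        ((if x = z then (1:ℝ) else 0) - (if x = y then 1 else 0)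
          - (if y = z then 1 else 0)) + 1 + s * t := by
    intro x y z s t
    simp only [inner_add_left, inner_add_right, inner_sub_left, inner_sub_right,
      real_inner_smul_left, real_inner_smul_right, hAA, hAw, hwA, hww]
    simp [eq_comm]
    ring
  -- difference of points
  have hdiff : ∀ (x y : Fin k) (a b : Fin r),
      pt x a - pt y b = (A x - A y) + (ε * a - ε * b) • w := by
    intro x y a b
    rw [hpt]
    simp only [sub_smul]
    abel
  -- bound on offsets
  have hoff : ∀ a b : Fin r, |(ε * a - ε * b)| ≤ Real.sin δ' := by
    intro a b
    have ha : (a : ℝ) ≤ r := by exact_mod_cast (a.2).le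
    have hb : (b : ℝ) ≤ r := by exact_mod_cast (b.2).le
    have ha0 : (0:ℝ) ≤ (a:ℝ) := Nat.cast_nonneg _
    have hb0 : (0:ℝ) ≤ (b:ℝ) := Nat.cast_nonneg _
    rw [abs_le]
    constructor
    · nlinarith
    · nlinarith
  -- key geometric lemma
  have key : ∀ (i j l : Fin k) (a b c : Fin r), i ≠ j → pt l c ≠ pt i a →
      EuclideanGeometry.angle (pt l c) (pt i a) (pt j b) ≤ Real.pi / 2 + δ := by
    intro i j l a b c hij hne
    have hangle : EuclideanGeometry.angle (pt l c) (pt i a) (pt j b)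
        = InnerProductGeometry.angle (pt l c - pt i a) (pt j b - pt i a) := rfl
    rw [hangle]
    set s : ℝ := ε * c - ε * a with hsdef
    set t : ℝ := ε * b - ε * a with htdef
    set u : Euc d := pt l c - pt i a with hu
    set v : Euc d := pt j b - pt i a with hv
    have hu' : u = (A l - A i) + s • w := hdiff l i c a
    have hv' : v = (A j - A i) + t • w := hdiff j i b a
    have hts : |t| ≤ Real.sin δ' := hoff b a
    have hss' : |s| ≤ Real.sin δ' := hoff c a
    have hvnorm : (1:ℝ) ≤ ‖v‖ := by
      have h2 : ⟪v, v⟫ = 2 + t * t := by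
        rw [hv', expand]
        simp [hij.symm, if_neg hij]
        ring
      have h3 : ‖v‖ * ‖v‖ = 2 + t * t := by
        rw [← real_inner_self_eq_norm_mul_norm, h2]
      nlinarith [norm_nonneg v, sq_nonneg t]
    have hmain : -(Real.sin δ' * (‖u‖ * ‖v‖)) ≤ ⟪u, v⟫ := by
      by_cases hl : l = i
      · -- hard case: z in same cluster as x
        subst hl
        have hiv : ⟪u, v⟫ = s * t := by
          rw [hu', hv', expand]
          simp [hij]
        have hun : ‖u‖ * ‖u‖ = s * s := by
          rw [← real_inner_self_eq_norm_mul_norm, hu', expand]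
          simp
        have habs : ‖u‖ = |s| := by
          have h1 : (0:ℝ) ≤ ‖u‖ := norm_nonneg u
          have h2 : (0:ℝ) ≤ |s| := abs_nonneg s
          nlinarith [sq_abs s, abs_nonneg s, norm_nonneg u, sq_nonneg (‖u‖ - |s|)]
        rw [hiv, habs]
        have h1 : |s * t| ≤ |s| * Real.sin δ' := by
          rw [abs_mul]
          exact mul_le_mul_of_nonneg_left hts (abs_nonneg s)
        have h2 : |s| * Real.sin δ' ≤ Real.sin δ' * (|s| * ‖v‖) := by
          nlinarith [mul_nonneg (mul_nonneg hsin.le (abs_nonneg s)) (sub_nonneg.2 hvnorm)]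
        have h3 := neg_abs_le (s * t)
        linarith
      · -- easy case: inner product is nonnegative
        have hiv : ⟪u, v⟫ = (if l = j then (1:ℝ) else 0) + 1 + s * t := by
          rw [hu', hv', expand]
          simp [hl, hij]
        have hst : |s * t| ≤ 1 := by
          rw [abs_mul]
          nlinarith [abs_nonneg s, abs_nonneg t]
        have h3 := neg_abs_le (s * t)
        have h4 := abs_nonneg (s*t)
        have h0 : (0:ℝ) ≤ ⟪u, v⟫ := by
          rw [hiv]
          by_cases hlj : l = j <;> simp [hlj] <;> linarith
        nlinarith [norm_nonneg u, norm_nonneg v, mul_nonneg (norm_nonneg u) (norm_nonneg v)]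
    have := angle_le_aux u v (Real.sin δ') hsin.le hmain
    rw [Real.arcsin_sin (by linarith) hδ'pi2] at this
    linarith
  -- injectivity of pt
  have hinA : ∀ (i : Fin k) (a : Fin r) (j : Fin k), ⟪A j, pt i a⟫ = if j = i then 1 else 0 := by
    intro i a j
    rw [hpt]
    simp only [inner_add_right, real_inner_smul_right, hAA, hAw]
    ring
  have hinw : ∀ (i : Fin k) (a : Fin r), ⟪w, pt i a⟫ = ε * a := by
    intro i a
    rw [hpt]
    simp only [inner_add_right, real_inner_smul_right, hwA, hww]
    ring
  have hptinj : ∀ i a i' a', pt i a = pt i' a' → i = i' ∧ a = a' := by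
    intro i a i' a' h
    have hii : i = i' := by
      by_contra hne
      have h1 : ⟪A i, pt i a⟫ = ⟪A i, pt i' a'⟫ := by rw [h]
      rw [hinA, hinA, if_pos rfl, if_neg hne] at h1
      norm_num at h1
    refine ⟨hii, ?_⟩
    have h2 : ⟪w, pt i a⟫ = ⟪w, pt i' a'⟫ := by rw [h]
    rw [hinw, hinw] at h2
    have h3 : (a : ℝ) = (a' : ℝ) := mul_left_cancel₀ hε.ne' h2
    have h4 : (a : ℕ) = (a' : ℕ) := by exact_mod_cast h3
    exact Fin.ext h4
  -- finish: define V and P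
  refine ⟨Finset.univ.image (fun p : Fin k × Fin r => pt p.1 p.2),
    fun i => Finset.univ.image (pt i), ?_, ?_, ?_, ?_⟩
  · intro i x hx
    simp only [Finset.mem_image, Finset.mem_univ, true_and] at hx ⊢
    obtain ⟨a, ha⟩ := hx
    exact ⟨⟨i, a⟩, ha⟩
  · intro i
    rw [Finset.card_image_of_injective _ (fun a a' h => (hptinj i a i a' h).2),
      Finset.card_univ, Fintype.card_fin]
  · intro i j hij
    rw [Finset.disjoint_left]
    intro x hx hx'
    simp only [Finset.mem_image, Finset.mem_univ, true_and] at hx hx'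
    obtain ⟨a, ha⟩ := hx
    obtain ⟨b, hb⟩ := hx'
    exact hij (hptinj i a j b (ha.trans hb.symm)).1
  · intro i j hij x hx y hy z hz hzx hzy
    simp only [Finset.mem_image, Finset.mem_univ, true_and] at hx hy hz
    obtain ⟨a, ha⟩ := hx
    obtain ⟨b, hb⟩ := hy
    obtain ⟨⟨l, c⟩, hc⟩ := hz
    subst ha; subst hb; subst hc
    exact ⟨key i j l a b c hij hzx, key j i l b a c (Ne.symm hij) hzy⟩
end

section
/- Let m ≥ 2. Suppose there exist points p₁, …, p_m ∈ ℝ^d and unit vectors u₁, …, u_m ∈ ℝ^d such that for all triples of distinct indices i, j, k the angle ∠p_i p_j p_k is acute and ⟪u_i, p_i − p_j⟫ < ⟪u_i, p_k − p_j⟫ < ⟪u_i, p_j − p_i⟫. Then for every N ∈ ℕ there exists a finite set V of points in Euclidean space ℝ^{d+m} containing m pairwise disjoint subsets V₁, …, V_m of cardinality N each, such that any two points lying in different subsets form a strict double-normal pair of V. -/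
/-!
Put part `i` on the parabola `β ↦ (p i + μ β² u i, β e_i)` in `ℝ^d × ℝ^m`, at the
scales `β = ε b^t`, `t < N`, and let `ε → 0`. Seen from a point of part `i`, any point of a
part `k ≠ i` and any point of part `j ≠ i` span an inner product tending to
`⟪p k - p i, p j - p i⟫ > 0` (an acute angle, or `‖p j - p i‖²` when `k = j`).
For two points of part `i` at scales `s ≠ t`, the relevant inner product is
`ε² ((b^s - b^t)(μ (b^s + b^t) c - b^t) + O(ε²))` with `c = ⟪u i, p j - p i⟫`, and its leading
term is positive as soon as `2 μ c < 1 ≤ μ c b`: the parabola bends towards `p j` fast enough to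
beat the vertical offsets. For `m ≥ 3` the hypothesis gives `c > 0`; for `m = 2` there are no
triples, and `p = (0, u 0)`, `u = (u 0, -u 0)` serves as the configuration.
-/

open scoped RealInnerProductSpace

open Filter Topology

lemma pow_sub_pow_mul_sub_pos {b μ c : ℝ} (hb : 1 < b) (hc : 0 < c) (hbig : 1 ≤ μ * c * b)
    (hsmall : 2 * μ * c < 1) {s t : ℕ} (hst : s ≠ t) :
    0 < (b ^ s - b ^ t) * (μ * (b ^ s + b ^ t) * c - b ^ t) := by
  have hμ : 0 < μ := by
    by_contra! h
    nlinarith [mul_pos hc (zero_lt_one.trans hb)]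
  have hbt : 0 < b ^ t := by positivity
  rcases lt_or_gt_of_ne hst with h | h
  · have hpow : b ^ s * b ≤ b ^ t := by
      rw [← pow_succ]; exact pow_le_pow_right₀ hb.le h
    have hlt : b ^ s < b ^ t := pow_lt_pow_right₀ hb h
    refine mul_pos_of_neg_of_neg (by linarith) ?_
    nlinarith [mul_le_mul_of_nonneg_left hlt.le (by positivity : 0 ≤ μ * c)]
  · have hpow : b ^ t * b ≤ b ^ s := by
      rw [← pow_succ]; exact pow_le_pow_right₀ hb.le h
    have hlt : b ^ t < b ^ s := pow_lt_pow_right₀ hb h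
    refine mul_pos (by linarith) ?_
    nlinarith [mul_le_mul_of_nonneg_left hpow (by positivity : 0 ≤ μ * c)]

section Parabola

variable {E : Type*} [NormedAddCommGroup E] [InnerProductSpace ℝ E]
  {ι : Type*} [DecidableEq ι] (p u : ι → E) (μ : ℝ)

noncomputable def parabolaPoint (i : ι) (β : ℝ) : WithLp 2 (E × EuclideanSpace ℝ ι) :=
  WithLp.toLp 2 (p i + (μ * β ^ 2) • u i, β • EuclideanSpace.single i 1)

lemma parabolaPoint_sub_parabolaPoint (i k : ι) (β β' : ℝ) :
    parabolaPoint p u μ k β' - parabolaPoint p u μ i β = WithLp.toLp 2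
      (p k - p i + ((μ * β' ^ 2) • u k - (μ * β ^ 2) • u i),
        β' • EuclideanSpace.single k 1 - β • EuclideanSpace.single i 1) := by
  rw [parabolaPoint, parabolaPoint, ← WithLp.toLp_sub, Prod.mk_sub_mk, add_sub_add_comm]

variable [Fintype ι]

lemma continuous_parabolaPoint (i : ι) : Continuous (parabolaPoint p u μ i) :=
  (WithLp.prod_continuous_toLp 2 _ _).comp (by fun_prop)

lemma inner_parabolaPoint_sub_parabolaPoint_same {i j : ι} (hij : i ≠ j) (β β' γ : ℝ) :
    ⟪parabolaPoint p u μ i β' - parabolaPoint p u μ i β,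
        parabolaPoint p u μ j γ - parabolaPoint p u μ i β⟫ =
      (β' - β) * (μ * (β' + β) *
        (⟪u i, p j - p i⟫ + μ * (γ ^ 2 * ⟪u i, u j⟫ - β ^ 2 * ⟪u i, u i⟫)) - β) := by
  simp only [parabolaPoint_sub_parabolaPoint, WithLp.prod_inner_apply, sub_self, zero_add,
    inner_sub_left, inner_sub_right, inner_add_right, real_inner_smul_left, real_inner_smul_right,
    EuclideanSpace.inner_single_left, PiLp.single_apply, if_true, if_neg hij, map_one]
  ring

lemma tendsto_inner_parabolaPoint_sub (i j k : ι) (s t r : ℝ) :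
    Tendsto (fun ε => ⟪parabolaPoint p u μ k (ε * s) - parabolaPoint p u μ i (ε * t),
        parabolaPoint p u μ j (ε * r) - parabolaPoint p u μ i (ε * t)⟫) (𝓝 0)
      (𝓝 ⟪p k - p i, p j - p i⟫) := by
  have hcont : Continuous fun ε : ℝ =>
      ⟪parabolaPoint p u μ k (ε * s) - parabolaPoint p u μ i (ε * t),
        parabolaPoint p u μ j (ε * r) - parabolaPoint p u μ i (ε * t)⟫ := by
    have := continuous_parabolaPoint p u μ
    fun_prop
  simpa [parabolaPoint, ← WithLp.toLp_sub] using hcont.tendsto 0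

variable {p u μ}

lemma eventually_inner_parabolaPoint_sub_pos
    (hc : ∀ i j, i ≠ j → 0 < ⟪u i, p j - p i⟫)
    (hac : ∀ k i j, i ≠ j → k ≠ i → k ≠ j → 0 < ⟪p k - p i, p j - p i⟫)
    {b : ℝ} (hb : 1 < b) (hbig : ∀ i j, i ≠ j → 1 ≤ μ * ⟪u i, p j - p i⟫ * b)
    (hsmall : ∀ i j, i ≠ j → 2 * μ * ⟪u i, p j - p i⟫ < 1)
    {i j k : ι} (hij : i ≠ j) {s t r : ℕ} (hne : (k, s) ≠ (i, t)) :
    ∀ᶠ ε in 𝓝[>] 0,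
      0 < ⟪parabolaPoint p u μ k (ε * b ^ s) - parabolaPoint p u μ i (ε * b ^ t),
        parabolaPoint p u μ j (ε * b ^ r) - parabolaPoint p u μ i (ε * b ^ t)⟫ := by
  rcases eq_or_ne k i with rfl | hki
  · have hst : s ≠ t := fun h => hne (by rw [h])
    set c := ⟪u k, p j - p k⟫
    set G : ℝ → ℝ := fun ε => (b ^ s - b ^ t) * (μ * (b ^ s + b ^ t) *
      (c + μ * ε ^ 2 * (b ^ (2 * r) * ⟪u k, u j⟫ - b ^ (2 * t) * ⟪u k, u k⟫)) - b ^ t)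
    have hG : ∀ᶠ ε in 𝓝 0, 0 < G ε := by
      refine (Continuous.tendsto (by fun_prop) 0).eventually_const_lt ?_
      simpa [G] using
        pow_sub_pow_mul_sub_pos hb (hc k j hij) (hbig k j hij) (hsmall k j hij) hst
    filter_upwards [nhdsWithin_le_nhds hG, self_mem_nhdsWithin] with ε hGε (hε : 0 < ε)
    rw [inner_parabolaPoint_sub_parabolaPoint_same p u μ hij]
    refine (mul_pos (pow_pos hε 2) hGε).trans_eq ?_
    simp only [G, c]
    ring
  · have hpos : 0 < ⟪p k - p i, p j - p i⟫ := by
      rcases eq_or_ne k j with rfl | hkj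
      · refine real_inner_self_pos.2 (sub_ne_zero.2 fun h => ?_)
        simpa [h] using hc i k hij
      · exact hac k i j hij hki hkj
    exact nhdsWithin_le_nhds
      ((tendsto_inner_parabolaPoint_sub p u μ i j k _ _ _).eventually (lt_mem_nhds hpos))

lemma exists_family_inner_pos
    (hc : ∀ i j, i ≠ j → 0 < ⟪u i, p j - p i⟫)
    (hac : ∀ k i j, i ≠ j → k ≠ i → k ≠ j → 0 < ⟪p k - p i, p j - p i⟫) (N : ℕ) :
    ∃ q : ι × Fin N → WithLp 2 (E × EuclideanSpace ℝ ι), ∀ i j, i ≠ j → ∀ t r x,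
      x ≠ (i, t) → 0 < ⟪q x - q (i, t), q (j, r) - q (i, t)⟫ := by
  obtain ⟨μ, hsmall, hμ : 0 < μ⟩ : ∃ μ : ℝ, (∀ i j, i ≠ j → 2 * μ * ⟪u i, p j - p i⟫ < 1) ∧
      0 < μ := by
    refine (Eventually.and ?_ self_mem_nhdsWithin).exists (f := 𝓝[>] (0 : ℝ))
    refine nhdsWithin_le_nhds (eventually_all.2 fun i => eventually_all.2 fun j =>
      eventually_imp_distrib_left.2 fun _ => ?_)
    exact (Continuous.tendsto (by fun_prop) 0).eventually_lt_const (by simp)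
  obtain ⟨b, hb, hbig⟩ : ∃ b : ℝ, 1 < b ∧ ∀ i j, i ≠ j → 1 ≤ μ * ⟪u i, p j - p i⟫ * b := by
    refine ((eventually_gt_atTop 1).and (eventually_all.2 fun i => eventually_all.2 fun j =>
      eventually_imp_distrib_left.2 fun hij => ?_)).exists
    exact (tendsto_id.const_mul_atTop (mul_pos hμ (hc i j hij))).eventually_ge_atTop 1
  set q : ℝ → ι × Fin N → WithLp 2 (E × EuclideanSpace ℝ ι) :=
    fun ε x => parabolaPoint p u μ x.1 (ε * b ^ (x.2 : ℕ))
  have hq : ∀ i j, i ≠ j → ∀ t r x, x ≠ (i, t) →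
      ∀ᶠ ε in 𝓝[>] 0, 0 < ⟪q ε x - q ε (i, t), q ε (j, r) - q ε (i, t)⟫ :=
    fun i j hij t r x hx => eventually_inner_parabolaPoint_sub_pos hc hac hb hbig hsmall hij
      (by simpa [Prod.ext_iff, Fin.val_inj] using hx)
  obtain ⟨ε, hε⟩ := (eventually_all.2 fun i => eventually_all.2 fun j =>
    eventually_imp_distrib_left.2 fun hij => eventually_all.2 fun t => eventually_all.2 fun r =>
      eventually_all.2 fun x => eventually_imp_distrib_left.2 (hq i j hij t r x)).exists
  exact ⟨q ε, hε⟩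

end Parabola

lemma containsStrictDNMultipartite_of_inner_pos {n m N : ℕ} (hm : 2 ≤ m)
    (q : Fin m × Fin N → Euc n)
    (hq : ∀ i j, i ≠ j → ∀ t r x, x ≠ (i, t) → 0 < ⟪q x - q (i, t), q (j, r) - q (i, t)⟫) :
    ContainsStrictDNMultipartite n m N := by
  have := Fin.nontrivial_iff_two_le.2 hm
  have hinj : Function.Injective q := by
    intro x y hxy
    by_contra hne
    obtain ⟨j, hj⟩ := exists_ne y.1
    -- a repeated point would make the inner product vanish
    simpa [hxy] using hq y.1 j hj.symm y.2 y.2 x hne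
  have hinj_part (i : Fin m) : Function.Injective fun t => q (i, t) :=
    hinj.comp (Prod.mk_right_injective i)
  refine ⟨Finset.univ.image q, fun i => Finset.univ.image fun t => q (i, t), ?_, ?_, ?_, ?_⟩
  · intro i
    simp [Finset.subset_iff]
  · intro i
    rw [Finset.card_image_of_injective _ (hinj_part i), Finset.card_univ, Fintype.card_fin]
  · intro i j hij
    simp [Finset.disjoint_left, hinj.eq_iff, hij.symm]
  · intro i j hij _ hp _ hq'
    simp only [Finset.mem_image, Finset.mem_univ, true_and] at hp hq'
    obtain ⟨t, rfl⟩ := hp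
    obtain ⟨r, rfl⟩ := hq'
    refine ⟨by simp [hinj.eq_iff, hij], by simp, by simp, ?_⟩
    simp only [Finset.mem_image, Finset.mem_univ, true_and, forall_exists_index,
      forall_apply_eq_imp_iff, hinj.ne_iff]
    exact fun x hxi hxj => ⟨hq i j hij t r x hxi, hq j i hij.symm r t x hxj⟩

lemma containsStrictDNMultipartite_of_acute {d m : ℕ} (hm : 2 ≤ m) (p u : Fin m → Euc d)
    (hc : ∀ i j, i ≠ j → 0 < ⟪u i, p j - p i⟫)
    (hac : ∀ k i j, i ≠ j → k ≠ i → k ≠ j → 0 < ⟪p k - p i, p j - p i⟫) (N : ℕ) :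
    ContainsStrictDNMultipartite (d + m) m N := by
  obtain ⟨q, hq⟩ := exists_family_inner_pos hc hac N
  let e : WithLp 2 (Euc d × Euc m) ≃ₗᵢ[ℝ] Euc (d + m) :=
    ((LinearIsometryEquiv.piLpCongrLeft 2 ℝ ℝ finSumFinEquiv.symm).trans
      (PiLp.sumPiLpEquivProdLpPiLp 2 fun _ => ℝ)).symm
  refine containsStrictDNMultipartite_of_inner_pos hm (e ∘ q) fun i j hij t r x hx => ?_
  simpa only [Function.comp_apply, ← map_sub, LinearIsometryEquiv.inner_map_map]
    using hq i j hij t r x hx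

theorem stmt15 (d m : ℕ) (hm : 2 ≤ m) (p u : Fin m → Euc d)
    (hu : ∀ i, ‖u i‖ = 1)
    (hacute : ∀ i j k : Fin m, i ≠ j → j ≠ k → i ≠ k →
      0 < ⟪p i - p j, p k - p j⟫)
    (hscal : ∀ i j k : Fin m, i ≠ j → j ≠ k → i ≠ k →
      ⟪u i, p i - p j⟫ < ⟪u i, p k - p j⟫ ∧
      ⟪u i, p k - p j⟫ < ⟪u i, p j - p i⟫) :
    ∀ N : ℕ, ContainsStrictDNMultipartite (d + m) m N := by
  rcases lt_or_ge m 3 with hm3 | hm3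
  · obtain rfl : m = 2 := by omega
    have hu0 : 0 < ⟪u 0, u 0⟫ := real_inner_self_pos.2 (norm_ne_zero_iff.1 (by simp [hu]))
    refine containsStrictDNMultipartite_of_acute le_rfl ![0, u 0] ![u 0, -u 0] ?_ ?_
    · intro i j hij
      fin_cases i <;> fin_cases j <;> simp_all
    · intro k i j
      fin_cases k <;> fin_cases i <;> fin_cases j <;> simp
  · refine containsStrictDNMultipartite_of_acute hm p u (fun i j hij => ?_)
      (fun k i j hij hki hkj => hacute k i j hki hij hkj)
    obtain ⟨k, hki, hkj⟩ := Fin.exists_ne_and_ne_of_two_lt i j (by omega)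
    have hneg : ⟪u i, p i - p j⟫ = -⟪u i, p j - p i⟫ := by rw [← inner_neg_right, neg_sub]
    have h := hscal i j k hij hkj.symm hki.symm
    linarith [h.1.trans h.2]
end

section
/- For every natural number d ≥ 2 and every r ∈ ℕ there exists a finite set V of points in Euclidean space ℝ^d containing ⌈d/2⌉ pairwise disjoint subsets, each of cardinality r, such that any two points lying in different subsets form a strict double-normal pair of V. (Equivalently, k'(d) ≥ ⌈d/2⌉.) -/
open scoped RealInnerProductSpace

namespace Stmt17Aux

noncomputable section

/-- The "x-coordinate" values of the points: a geometric sequence with ratio `1/5`. -/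
def sg (t : ℕ) : ℝ := (1/5 : ℝ) ^ (t + 1)

/-- The "z-coordinate" values of the points. -/
def gm (t : ℕ) : ℝ := 1/4 - sg t ^ 2

lemma sg_pos (t : ℕ) : 0 < sg t := by unfold sg; positivity

lemma sg_le (t : ℕ) : sg t ≤ 1/5 := by
  unfold sg
  calc ((1:ℝ)/5) ^ (t + 1) ≤ (1/5 : ℝ) ^ 1 :=
        pow_le_pow_of_le_one (by norm_num) (by norm_num) (by omega)
    _ = 1/5 := pow_one _

lemma sg_ratio {s w : ℕ} (h : s < w) : sg w ≤ sg s / 5 := by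
  unfold sg
  have h1 : ((1:ℝ)/5) ^ (w + 1) ≤ (1/5 : ℝ) ^ (s + 2) :=
    pow_le_pow_of_le_one (by norm_num) (by norm_num) (by omega)
  have h2 : ((1:ℝ)/5) ^ (s + 2) = (1/5 : ℝ) ^ (s + 1) / 5 := by
    rw [pow_succ]; ring
  linarith

lemma sg_sep {s w : ℕ} (h : s ≠ w) : sg w ≤ sg s / 5 ∨ sg s ≤ sg w / 5 := by
  rcases lt_or_gt_of_ne h with h' | h'
  · exact Or.inl (sg_ratio h')
  · exact Or.inr (sg_ratio h')

lemma sg_injective {s w : ℕ} (h : sg s = sg w) : s = w := by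
  by_contra hne
  rcases sg_sep hne with h' | h' <;>
    [have := sg_pos w; have := sg_pos s] <;> linarith

lemma gm_pos (t : ℕ) : 0 < gm t := by
  have h1 := sg_pos t; have h2 := sg_le t
  unfold gm; nlinarith

lemma arith_geo {a b : ℝ} (ha : 0 < a) (ha' : a ≤ 1/5) (hb : 0 < b) (hb' : b ≤ 1/5)
    (hsep : b ≤ a/5 ∨ a ≤ b/5) :
    0 < a * (a - b) + (1/4 - a^2) * ((1/4 - a^2) - (1/4 - b^2)) := by
  rcases hsep with h | h
  · have hab : 0 < a - b := by linarith
    have h2 : 0 < a - (1/4 - a^2) * (a + b) := by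
      nlinarith [mul_nonneg (sq_nonneg a) (by linarith : (0:ℝ) ≤ a + b)]
    nlinarith [mul_pos hab h2]
  · have hab : 0 < b - a := by linarith
    have hq : (0:ℝ) ≤ (1/25 - a^2) * (a + b) :=
      mul_nonneg (by nlinarith) (by linarith)
    have h2 : 0 < (1/4 - a^2) * (a + b) - a := by nlinarith [hq]
    nlinarith [mul_pos hab h2]

lemma arith_pair {a b c : ℝ} (ha : 0 < a) (ha' : a ≤ 1/5) (hb : 0 < b) (hb' : b ≤ 1/5)
    (hc : 0 < c) (hc' : c ≤ 1/5) (hsep : b ≤ a/5 ∨ a ≤ b/5) :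
    0 < a * (a - b) + ((1/4 - a^2) - (1/4 - b^2)) * ((1/4 - a^2) + (1/4 - c^2)) := by
  rcases hsep with h | h
  · have hab : 0 < a - b := by linarith
    have h2 : 0 < a - (1/2 - a^2 - c^2) * (a + b) := by
      nlinarith [mul_nonneg (by positivity : (0:ℝ) ≤ a^2 + c^2) (by linarith : (0:ℝ) ≤ a + b)]
    nlinarith [mul_pos hab h2]
  · have hab : 0 < b - a := by linarith
    have hq : (0:ℝ) ≤ (2/25 - a^2 - c^2) * (a + b) :=
      mul_nonneg (by nlinarith) (by linarith)
    have h2 : 0 < (1/2 - a^2 - c^2) * (a + b) - a := by nlinarith [hq]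
    nlinarith [mul_pos hab h2]

lemma arith_cc {a b c : ℝ} (ha : 0 < a) (ha' : a ≤ 1/5) (hb : 0 < b) (hb' : b ≤ 1/5)
    (hc : 0 < c) (hc' : c ≤ 1/5) :
    0 < a^2 + (1/4 - a^2)^2 - (1/4 - b^2) * (1/4 - c^2) := by
  nlinarith [mul_nonneg (by nlinarith : (0:ℝ) ≤ 1/25 - b^2) (sq_nonneg c),
    sq_nonneg (a^2), mul_pos ha ha]


section Geometry

variable {d : ℕ}

/-- Index of the "x-axis" of cluster `i`. -/
def xIdx (hd : 2 ≤ d) (i : Fin ((d + 1) / 2)) : Fin d :=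
  ⟨2 * i.val, by have := i.isLt; omega⟩

/-- Index of the "z-axis" of cluster `i`. -/
def zIdx (hd : 2 ≤ d) (i : Fin ((d + 1) / 2)) : Fin d :=
  if h : 2 * i.val + 1 < d then ⟨2 * i.val + 1, h⟩
  else ⟨2 * i.val - 1, by have := i.isLt; omega⟩

/-- Sign of the "z-axis" of cluster `i`. -/
def zSgn (d : ℕ) (i : Fin ((d + 1) / 2)) : ℝ :=
  if 2 * i.val + 1 < d then 1 else -1

lemma xIdx_val (hd : 2 ≤ d) (i : Fin ((d + 1) / 2)) : (xIdx hd i).val = 2 * i.val := rfl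

lemma zIdx_val (hd : 2 ≤ d) (i : Fin ((d + 1) / 2)) :
    (zIdx hd i).val = if 2 * i.val + 1 < d then 2 * i.val + 1 else 2 * i.val - 1 := by
  unfold zIdx; split <;> rfl

lemma zSgn_sq (i : Fin ((d + 1) / 2)) : zSgn d i * zSgn d i = 1 := by
  unfold zSgn; split <;> norm_num

lemma xIdx_ne_zIdx (hd : 2 ≤ d) (i j : Fin ((d + 1) / 2)) : xIdx hd i ≠ zIdx hd j := by
  have hi := i.isLt; have hj := j.isLt
  apply Fin.ne_of_val_ne
  rw [xIdx_val, zIdx_val]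
  split <;> omega

lemma xIdx_inj (hd : 2 ≤ d) {i j : Fin ((d + 1) / 2)} (h : xIdx hd i = xIdx hd j) : i = j := by
  have := congrArg Fin.val h
  rw [xIdx_val, xIdx_val] at this
  exact Fin.ext (by omega)

lemma zIdx_eq_cases (hd : 2 ≤ d) {i j : Fin ((d + 1) / 2)} (h : zIdx hd i = zIdx hd j) :
    i = j ∨ (2 * j.val + 1 = d ∧ i.val + 1 = j.val) ∨ (2 * i.val + 1 = d ∧ j.val + 1 = i.val) := by
  have hv := congrArg Fin.val h
  rw [zIdx_val, zIdx_val] at hv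
  have hi := i.isLt; have hj := j.isLt
  split_ifs at hv with h1 h2 h2
  · exact Or.inl (Fin.ext (by omega))
  · exact Or.inr (Or.inl (by omega))
  · exact Or.inr (Or.inr (by omega))
  · exact Or.inl (Fin.ext (by omega))

lemma zSgn_mul (hd : 2 ≤ d) {i j : Fin ((d + 1) / 2)} (h : zIdx hd i = zIdx hd j)
    (hij : i ≠ j) : zSgn d i * zSgn d j = -1 := by
  have hi := i.isLt; have hj := j.isLt
  rcases zIdx_eq_cases hd h with rfl | ⟨h1, h2⟩ | ⟨h1, h2⟩
  · exact absurd rfl hij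
  · unfold zSgn; rw [if_pos (by omega), if_neg (by omega)]; norm_num
  · unfold zSgn; rw [if_neg (by omega), if_pos (by omega)]; norm_num

lemma zIdx_unique (hd : 2 ≤ d) {a b c : Fin ((d + 1) / 2)} (hab : zIdx hd a = zIdx hd b)
    (hac : zIdx hd a = zIdx hd c) (h1 : a ≠ b) (h2 : a ≠ c) : b = c := by
  have h1' : a.val ≠ b.val := fun hh => h1 (Fin.ext hh)
  have h2' : a.val ≠ c.val := fun hh => h2 (Fin.ext hh)
  rcases zIdx_eq_cases hd hab with rfl | ⟨p1, p2⟩ | ⟨p1, p2⟩ <;>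
    rcases zIdx_eq_cases hd hac with rfl | ⟨q1, q2⟩ | ⟨q1, q2⟩ <;>
      exact Fin.ext (by omega)

/-- The point of cluster `i` with parameter `t`. -/
def pt (hd : 2 ≤ d) (i : Fin ((d + 1) / 2)) (t : ℕ) : Euc d :=
  EuclideanSpace.single (xIdx hd i) (sg t) +
    EuclideanSpace.single (zIdx hd i) (zSgn d i * gm t)

lemma inner_single_single (a b : Fin d) (x y : ℝ) :
    ⟪EuclideanSpace.single a x, EuclideanSpace.single b y⟫ = if a = b then x * y else 0 := by
  rw [EuclideanSpace.inner_single_left]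
  simp only [EuclideanSpace.single_apply, conj_trivial]
  split_ifs with h <;> ring

lemma gram (hd : 2 ≤ d) (i j : Fin ((d + 1) / 2)) (s t : ℕ) :
    ⟪pt hd i s, pt hd j t⟫ =
      (if i = j then sg s * sg t else 0) +
      (if zIdx hd i = zIdx hd j then (zSgn d i * zSgn d j) * (gm s * gm t) else 0) := by
  unfold pt
  rw [inner_add_left, inner_add_right, inner_add_right, inner_single_single,
    inner_single_single, inner_single_single, inner_single_single,
    if_neg (xIdx_ne_zIdx hd i j), if_neg (Ne.symm (xIdx_ne_zIdx hd j i))]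
  have hx : (xIdx hd i = xIdx hd j) = (i = j) :=
    propext ⟨xIdx_inj hd, fun h => h ▸ rfl⟩
  simp only [hx]
  by_cases hz : zIdx hd i = zIdx hd j <;> simp only [hz, if_pos, if_neg, ite_true, ite_false] <;> ring

end Geometry

section Main

variable {d : ℕ}

lemma pt_apply_x (hd : 2 ≤ d) (i j : Fin ((d + 1) / 2)) (t : ℕ) :
    pt hd i t (xIdx hd j) = if xIdx hd j = xIdx hd i then sg t else 0 := by
  unfold pt
  rw [PiLp.add_apply, EuclideanSpace.single_apply, EuclideanSpace.single_apply,
    if_neg (xIdx_ne_zIdx hd j i), add_zero]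

lemma pt_inj (hd : 2 ≤ d) {i j : Fin ((d + 1) / 2)} {t s : ℕ}
    (h : pt hd i t = pt hd j s) : i = j ∧ t = s := by
  have hval : pt hd i t (xIdx hd i) = pt hd j s (xIdx hd i) := by rw [h]
  rw [pt_apply_x, pt_apply_x, if_pos rfl] at hval
  by_cases hij : i = j
  · subst hij
    rw [if_pos rfl] at hval
    exact ⟨rfl, sg_injective hval⟩
  · rw [if_neg (fun hh => hij (xIdx_inj hd hh))] at hval
    exact absurd hval (ne_of_gt (sg_pos t))

lemma pt_ne (hd : 2 ≤ d) {i j : Fin ((d + 1) / 2)} (hij : i ≠ j) (t s : ℕ) :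
    pt hd i t ≠ pt hd j s :=
  fun h => hij (pt_inj hd h).1

/-- The master inequality: for points `x = pt l w`, `p = pt i s`, `q = pt j t` with
`i ≠ j`, `x ≠ p`, `x ≠ q`, the inner product `⟪x - p, q - p⟫` is positive. -/
lemma master (hd : 2 ≤ d) {i j l : Fin ((d + 1) / 2)} {s t w : ℕ} (hij : i ≠ j)
    (hxp : pt hd l w ≠ pt hd i s) (hxq : pt hd l w ≠ pt hd j t) :
    0 < ⟪pt hd l w - pt hd i s, pt hd j t - pt hd i s⟫ := by
  have hps : 0 < sg s := sg_pos s
  have hpw : 0 < sg w := sg_pos w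
  have hpt : 0 < sg t := sg_pos t
  have hls : sg s ≤ 1/5 := sg_le s
  have hlw : sg w ≤ 1/5 := sg_le w
  have hlt : sg t ≤ 1/5 := sg_le t
  have hgs : 0 < gm s := gm_pos s
  have hgw : 0 < gm w := gm_pos w
  have hgt : 0 < gm t := gm_pos t
  rw [inner_sub_left, inner_sub_right, inner_sub_right, gram, gram, gram, gram]
  rw [if_pos (rfl : i = i), if_pos (rfl : zIdx hd i = zIdx hd i), zSgn_sq, if_neg hij]
  by_cases hli : l = i
  · subst hli
    have hws : w ≠ s := by
      rintro rfl; exact hxp rfl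
    rw [if_neg hij, if_pos (rfl : l = l), if_pos (rfl : zIdx hd l = zIdx hd l), zSgn_sq]
    by_cases hz : zIdx hd l = zIdx hd j
    · rw [if_pos hz, if_pos hz, zSgn_mul hd hz hij]
      have key := arith_pair hps hls hpw hlw hpt hlt (sg_sep (Ne.symm hws))
      unfold gm at key ⊢
      nlinarith [key]
    · rw [if_neg hz, if_neg hz]
      have key := arith_geo hps hls hpw hlw (sg_sep (Ne.symm hws))
      unfold gm at key ⊢
      nlinarith [key]
  · by_cases hlj : l = j
    · subst hlj
      have hwt : w ≠ t := by
        rintro rfl; exact hxq rfl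
      rw [if_pos (rfl : l = l), if_pos (rfl : zIdx hd l = zIdx hd l), zSgn_sq, if_neg hli]
      by_cases hz : zIdx hd i = zIdx hd l
      · rw [if_pos hz.symm, if_pos hz, zSgn_mul hd hz (fun h => hli h.symm),
          zSgn_mul hd hz.symm hli]
        nlinarith [mul_pos hpw hpt, mul_pos hgw hgt, mul_pos hgw hgs, mul_pos hgs hgt,
          mul_pos hps hps, mul_pos hgs hgs]
      · rw [if_neg (fun h => hz h.symm), if_neg hz]
        nlinarith [mul_pos hpw hpt, mul_pos hgw hgt, mul_pos hps hps, mul_pos hgs hgs]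
    · rw [if_neg hlj, if_neg hli]
      by_cases hz1 : zIdx hd l = zIdx hd j
      · have hz2 : ¬ zIdx hd l = zIdx hd i := by
          intro hz2
          exact hij (zIdx_unique hd hz2 hz1 hli hlj)
        have hz3 : ¬ zIdx hd i = zIdx hd j := by
          intro hz3
          exact hli (zIdx_unique hd hz3.symm (hz1.symm) (Ne.symm hij) (fun h => hlj h.symm)).symm
        rw [if_pos hz1, if_neg hz2, if_neg hz3, zSgn_mul hd hz1 hlj]
        have key := arith_cc hps hls hpw hlw hpt hlt
        unfold gm at key ⊢
        nlinarith [key]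
      · by_cases hz2 : zIdx hd l = zIdx hd i
        · have hz3 : ¬ zIdx hd i = zIdx hd j := by
            intro hz3
            exact hlj (zIdx_unique hd hz2.symm hz3 (Ne.symm hli) hij)
          rw [if_neg hz1, if_pos hz2, if_neg hz3, zSgn_mul hd hz2 hli]
          nlinarith [mul_pos hgw hgs, mul_pos hps hps, mul_pos hgs hgs]
        · by_cases hz3 : zIdx hd i = zIdx hd j
          · rw [if_neg hz1, if_neg hz2, if_pos hz3, zSgn_mul hd hz3 hij]
            nlinarith [mul_pos hgs hgt, mul_pos hps hps, mul_pos hgs hgs]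
          · rw [if_neg hz1, if_neg hz2, if_neg hz3]
            nlinarith [mul_pos hps hps, mul_pos hgs hgs]

end Main

end

end Stmt17Aux

open Stmt17Aux in
theorem stmt17 (d : ℕ) (hd : 2 ≤ d) :
    ∀ r : ℕ, ContainsStrictDNMultipartite d ((d + 1) / 2) r := by
  intro r
  classical
  haveI : DecidableEq (Euc d) := Classical.decEq _
  refine ⟨Finset.univ.biUnion
      (fun i : Fin ((d + 1) / 2) =>
        (Finset.image (fun t : Fin r => pt hd i t.val) Finset.univ : Finset (Euc d))),
    fun i => (Finset.image (fun t : Fin r => pt hd i t.val) Finset.univ : Finset (Euc d)),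
    ?_, ?_, ?_, ?_⟩
  · intro i x hx
    exact Finset.mem_biUnion.mpr ⟨i, Finset.mem_univ i, hx⟩
  · intro i
    rw [Finset.card_image_of_injective _ (fun a b h => Fin.ext (pt_inj hd h).2),
      Finset.card_univ, Fintype.card_fin]
  · intro i j hij
    rw [Finset.disjoint_left]
    rintro x hxi hxj
    obtain ⟨t, -, rfl⟩ := Finset.mem_image.mp hxi
    obtain ⟨u, -, hu⟩ := Finset.mem_image.mp hxj
    exact pt_ne hd (fun h => hij h.symm) u.val t.val hu
  · intro i j hij p hp q hq
    obtain ⟨t, -, rfl⟩ := Finset.mem_image.mp hp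
    obtain ⟨u, -, rfl⟩ := Finset.mem_image.mp hq
    refine ⟨pt_ne hd hij t.val u.val, Finset.mem_biUnion.mpr ⟨i, Finset.mem_univ i, hp⟩,
      Finset.mem_biUnion.mpr ⟨j, Finset.mem_univ j, hq⟩, ?_⟩
    intro x hx hxp hxq
    obtain ⟨l, -, hl⟩ := Finset.mem_biUnion.mp hx
    obtain ⟨w, -, rfl⟩ := Finset.mem_image.mp hl
    exact ⟨master hd hij hxp hxq, master hd hij.symm hxq hxp⟩
end
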